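/- arXiv:2502.21063 — 10 statements merged into one kernel-verified Lean document; each statement's English description precedes it below -/
import Mathlib

section
/- Let X be a nonempty finite set and c a choice correspondence on X. Then c satisfies path independence if and only if there exists a non-degenerate tie-break rule π such that the induced stochastic choice p_{π|c} is regular. -/
/-!
Regularity of `p_{π|c}` forces Sen's property α (an element chosen from `B` has positive
probability in `c B`, hence in `c A` for `A ⊆ B`) and Aizerman's property: if `c B ⊆ A ⊆ B`,
then `π(·, c A)` and `π(·, c B)` are both probability vectors on `A` and the first dominates
the second termwise, so they have the same support. For choice correspondences, α together with
Aizerman's property is equivalent to path independence.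

Conversely, call an enumeration of `X` compatible with `c` if every element is chosen by `c`
from the set formed by itself and its successors. Under α, the first element of a menu `S` in a
compatible enumeration lies in `c S`, and under Aizerman's property every element of `c S` comes
first in `S` for some compatible enumeration (build the enumeration greedily). Let `π(x, S)` be the
fraction of compatible enumerations in which `x` is the first element of `S`. If `x ∈ A ⊆ B` comes
first in `c B`, it comes first in `B`, hence in `A` and in `c A`; this is regularity.
-/

open Finset

variable {X : Type*}

/-- `c` is a choice correspondence: on every nonempty menu it selects a
nonempty subset of the menu. -/
def IsChoice (c : Finset X → Finset X) : Prop :=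
  ∀ A : Finset X, A.Nonempty → c A ⊆ A ∧ (c A).Nonempty

/-- The logit rule `p_{u|c}`. -/
noncomputable def logit [DecidableEq X] (u : X → ℝ) (c : Finset X → Finset X) (x : X) (A : Finset X) : ℝ :=
  if x ∈ c A then u x / ∑ b ∈ c A, u b else 0

/-- Regularity of a stochastic choice function. -/
def Regular (p : X → Finset X → ℝ) : Prop :=
  ∀ A B : Finset X, A ⊆ B → ∀ x ∈ A, p x A ≥ p x B

/-- Sen's property α. -/
def PropAlpha (c : Finset X → Finset X) : Prop :=
  ∀ A B : Finset X, A ⊆ B → ∀ x ∈ A, x ∈ c B → x ∈ c A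

/-- Property β. -/
def PropBeta (c : Finset X → Finset X) : Prop :=
  ∀ A B : Finset X, A ⊆ B → ∀ x ∈ c A, ∀ y ∈ c A, (x ∈ c B ↔ y ∈ c B)

/-- Property θ. -/
def PropTheta [DecidableEq X] (c : Finset X → Finset X) : Prop :=
  ∀ A B : Finset X, A ⊆ B → (c A ∩ c B).Nonempty → (c A).card ≤ (c B).card

/-- Path independence. -/
def PathIndep [DecidableEq X] (c : Finset X → Finset X) : Prop :=
  ∀ A B : Finset X, A.Nonempty → B.Nonempty → c (A ∪ B) = c (c A ∪ c B)

/-- The revealed relation `R`: `x R y` iff some menu contains both, `x` is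
chosen and `y` is not. -/
def Rev (c : Finset X → Finset X) (x y : X) : Prop :=
  ∃ A : Finset X, x ∈ c A ∧ y ∈ A ∧ y ∉ c A

/-- `u` is aligned with the revealed relation `R`. -/
def AlignedRev (c : Finset X → Finset X) (u : X → ℝ) : Prop :=
  ∀ x y, Rev c x y → u y < u x

/-- `c` is represented as a General Threshold Luce Model by `(v, ε)`. -/
def GTLMRep (c : Finset X → Finset X) (v : X → ℝ) (ε : Finset X → ℝ) : Prop :=
  (∀ x, 0 < v x) ∧ (∀ A, 0 ≤ ε A) ∧
    ∀ A : Finset X, A.Nonempty → ∀ x, (x ∈ c A ↔ x ∈ A ∧ ∀ y ∈ A, v y - v x ≤ ε A)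

/-- `c` is a General Threshold Luce Model. -/
def IsGTLM (c : Finset X → Finset X) : Prop :=
  ∃ (v : X → ℝ) (ε : Finset X → ℝ), GTLMRep c v ε

/-- The welfare of a menu under utility `u`. -/
noncomputable def Welfare [DecidableEq X] (u : X → ℝ) (c : Finset X → Finset X) (A : Finset X) : ℝ :=
  ∑ a ∈ A, u a * logit u c a A

/-- A utility function on `X` is strongly concave if for some enumeration of
`X` differences are decreasing in the strong sense. -/
def StronglyConcaveFn [Fintype X] (u : X → ℝ) : Prop :=
  ∃ e : Fin (Fintype.card X) ≃ X, ∀ l k m : Fin (Fintype.card X),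
    l < k → k < m → u (e m) - u (e k) ≤ u (e k) - u (e l)

/-- A utility function on `X` is strongly convex if for some enumeration of
`X` differences are increasing in the strong sense. -/
def StronglyConvexFn [Fintype X] (u : X → ℝ) : Prop :=
  ∃ e : Fin (Fintype.card X) ≃ X, ∀ l k m : Fin (Fintype.card X),
    l < k → k < m → u (e k) - u (e l) ≤ u (e m) - u (e k)

/-- A non-degenerate tie-break rule. -/
def TieBreak {X : Type*} (pi : X → Finset X → ℝ) : Prop :=
  ∀ S : Finset X, S.Nonempty →
    (∀ x ∈ S, 0 < pi x S) ∧ (∀ x, x ∉ S → pi x S = 0) ∧ (∑ x ∈ S, pi x S = 1)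

def PropAizerman (c : Finset X → Finset X) : Prop :=
  ∀ A B : Finset X, c B ⊆ A → A ⊆ B → c A ⊆ c B

section Regular

variable {c : Finset X → Finset X} {pi : X → Finset X → ℝ}

theorem TieBreak.sum_eq_one_of_subset {S A : Finset X} (hpi : TieBreak pi) (hS : S.Nonempty)
    (hSA : S ⊆ A) : ∑ x ∈ A, pi x S = 1 :=
  (sum_subset hSA fun x _ hx => (hpi S hS).2.1 x hx).symm.trans (hpi S hS).2.2

theorem propAlpha_of_regular (hc : IsChoice c) (hpi : TieBreak pi)
    (hreg : Regular fun x A => pi x (c A)) : PropAlpha c := by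
  intro A B hAB x hxA hxB
  by_contra hx
  have hpos : 0 < pi x (c B) := (hpi _ (hc B ⟨x, hAB hxA⟩).2).1 x hxB
  have hzero : pi x (c A) = 0 := (hpi _ (hc A ⟨x, hxA⟩).2).2.1 x hx
  linarith [hreg A B hAB x hxA]

theorem propAizerman_of_regular (hc : IsChoice c) (hpi : TieBreak pi)
    (hreg : Regular fun x A => pi x (c A)) : PropAizerman c := by
  intro A B hBA hAB y hy
  rcases B.eq_empty_or_nonempty with rfl | hB
  · rwa [subset_empty.1 hAB] at hy
  have hcB := (hc B hB).2
  obtain ⟨hcAA, hcA⟩ := hc A (hcB.mono hBA)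
  by_contra hyB
  have hlt : ∑ x ∈ A, pi x (c B) < ∑ x ∈ A, pi x (c A) := by
    refine sum_lt_sum (fun x hx => hreg A B hAB x hx) ⟨y, hcAA hy, ?_⟩
    rw [(hpi _ hcB).2.1 y hyB]
    exact (hpi _ hcA).1 y hy
  rw [hpi.sum_eq_one_of_subset hcB hBA, hpi.sum_eq_one_of_subset hcA hcAA] at hlt
  exact lt_irrefl _ hlt

end Regular

section PathIndep

variable [DecidableEq X] {c : Finset X → Finset X}

theorem PathIndep.choice_choice (h : PathIndep c) {A : Finset X} (hA : A.Nonempty) :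
    c (c A) = c A := by
  simpa only [union_self] using (h A A hA hA).symm

theorem PathIndep.propAlpha (hc : IsChoice c) (h : PathIndep c) : PropAlpha c := by
  intro A B hAB x hxA hxB
  rcases (B \ A).eq_empty_or_nonempty with hBA | hBA
  · rwa [Subset.antisymm hAB (sdiff_eq_empty_iff_subset.1 hBA)]
  have hcA := hc A ⟨x, hxA⟩
  have hcBA := hc _ hBA
  have hx : x ∈ c A ∪ c (B \ A) := by
    have hBeq := h A (B \ A) ⟨x, hxA⟩ hBA
    rw [union_sdiff_of_subset hAB] at hBeq
    exact (hc _ (hcA.2.mono subset_union_left)).1 (hBeq ▸ hxB)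
  rcases mem_union.1 hx with hx | hx
  · exact hx
  · exact absurd (hcBA.1 hx) (notMem_sdiff_of_mem_right hxA)

theorem PathIndep.propAizerman (hc : IsChoice c) (h : PathIndep c) : PropAizerman c := by
  intro A B hBA hAB
  rcases B.eq_empty_or_nonempty with rfl | hB
  · rw [subset_empty.1 hAB]
  have hcB := (hc B hB).2
  have hA := hcB.mono hBA
  refine (?_ : c A = c B).subset
  calc c A = c (A ∪ c B) := by rw [union_eq_left.2 hBA]
    _ = c (c A ∪ c B) := by rw [h A (c B) hA hcB, h.choice_choice hB]
    _ = c B := by rw [← h A B hA hB, union_eq_right.2 hAB]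

theorem PathIndep.of_propAlpha_of_propAizerman (hc : IsChoice c) (hα : PropAlpha c)
    (hAiz : PropAizerman c) : PathIndep c := by
  intro A B hA hB
  have hcA := hc A hA
  have hcB := hc B hB
  have hsub : c A ∪ c B ⊆ A ∪ B := union_subset_union hcA.1 hcB.1
  have hAB := hA.mono (subset_union_left (s₂ := B))
  have hchosen : c (A ∪ B) ⊆ c A ∪ c B := by
    intro x hx
    rcases mem_union.1 ((hc _ hAB).1 hx) with h | h
    · exact mem_union_left _ (hα _ _ subset_union_left x h hx)
    · exact mem_union_right _ (hα _ _ subset_union_right x h hx)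
  exact Subset.antisymm (fun x hx => hα _ _ hsub x (hchosen hx) hx) (hAiz _ _ hchosen hsub)

theorem pathIndep_iff_propAlpha_and_propAizerman (hc : IsChoice c) :
    PathIndep c ↔ PropAlpha c ∧ PropAizerman c :=
  ⟨fun h => ⟨h.propAlpha hc, h.propAizerman hc⟩,
    fun h => PathIndep.of_propAlpha_of_propAizerman hc h.1 h.2⟩

end PathIndep

theorem PropAizerman.choice_choice {c : Finset X → Finset X} (hc : IsChoice c)
    (hα : PropAlpha c) (hAiz : PropAizerman c) {A : Finset X} (hA : A.Nonempty) :
    c (c A) = c A :=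
  Subset.antisymm (hAiz _ _ Subset.rfl (hc A hA).1) fun x hx => hα _ _ (hc A hA).1 x hx hx

section Enumerations

variable [DecidableEq X] {c : Finset X → Finset X} {S A B : Finset X} {l : List X} {a x : X}

def firstIn (S : Finset X) (l : List X) : Option X :=
  l.find? (· ∈ S)

theorem mem_of_firstIn_eq_some (h : firstIn S l = some a) : a ∈ S := by
  simpa using List.find?_some h

theorem firstIn_isSome (hxS : x ∈ S) (hxl : x ∈ l) : (firstIn S l).isSome :=
  List.find?_isSome.2 ⟨x, hxl, by simpa using hxS⟩

theorem firstIn_cons_of_mem (h : a ∈ S) : firstIn S (a :: l) = some a :=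
  List.find?_cons_of_pos (by simpa using h)

theorem firstIn_cons_of_notMem (h : a ∉ S) : firstIn S (a :: l) = firstIn S l :=
  List.find?_cons_of_neg (by simpa using h)

theorem firstIn_eq_of_subset (hAB : A ⊆ B) (hxA : x ∈ A) (h : firstIn B l = some x) :
    firstIn A l = some x := by
  induction l with
  | nil => simp [firstIn] at h
  | cons b t ih =>
    by_cases hb : b ∈ B
    · obtain rfl := Option.some_inj.1 ((firstIn_cons_of_mem hb).symm.trans h)
      exact firstIn_cons_of_mem hxA
    · rw [firstIn_cons_of_notMem hb] at h
      rw [firstIn_cons_of_notMem fun hbA => hb (hAB hbA)]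
      exact ih h

def Compatible (c : Finset X → Finset X) : List X → Prop
  | [] => True
  | a :: l => a ∈ c (a :: l).toFinset ∧ Compatible c l

theorem Compatible.mem_of_firstIn_eq_some (hα : PropAlpha c) (hl : Compatible c l)
    (hS : ∀ y ∈ S, y ∈ l) (h : firstIn S l = some a) : a ∈ c S := by
  induction l with
  | nil => simp [firstIn] at h
  | cons b t ih =>
    by_cases hb : b ∈ S
    · obtain rfl := Option.some_inj.1 ((firstIn_cons_of_mem hb).symm.trans h)
      exact hα S _ (fun y hy => List.mem_toFinset.2 (hS y hy)) _ hb hl.1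
    · rw [firstIn_cons_of_notMem hb] at h
      refine ih hl.2 (fun y hy => ?_) h
      exact (List.mem_cons.1 (hS y hy)).resolve_left fun hyb => hb (hyb ▸ hy)

theorem Compatible.cons_of_perm_erase {R : Finset X} (ha : a ∈ c R) (haR : a ∈ R)
    (hl : l.Perm (R.erase a).toList) (hlc : Compatible c l) :
    (a :: l).Perm R.toList ∧ Compatible c (a :: l) := by
  have hperm : (a :: l).Perm R.toList := by
    have := (hl.cons a).trans (toList_insert (notMem_erase a R)).symm
    rwa [insert_erase haR] at this
  refine ⟨hperm, ?_, hlc⟩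
  rwa [List.toFinset_eq_of_perm _ _ hperm, toList_toFinset]

theorem exists_compatible_perm (hc : IsChoice c) (R : Finset X) :
    ∃ l : List X, l.Perm R.toList ∧ Compatible c l := by
  induction R using Finset.strongInduction with
  | H R ih =>
    rcases R.eq_empty_or_nonempty with rfl | hR
    · exact ⟨[], by simp, trivial⟩
    obtain ⟨a, ha⟩ := (hc R hR).2
    have haR := (hc R hR).1 ha
    obtain ⟨l, hl, hlc⟩ := ih _ (erase_ssubset haR)
    exact ⟨a :: l, Compatible.cons_of_perm_erase ha haR hl hlc⟩

/-- Greedy construction: while `c R` leaves `B`, put an element of `c R \ B` first; once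
`c R ⊆ B`, Aizerman's property gives `x ∈ c R`, and `x` goes first. -/
theorem exists_compatible_perm_firstIn_eq (hc : IsChoice c) (hAiz : PropAizerman c)
    (hB : B.Nonempty) (hx : x ∈ c B) (R : Finset X) (hBR : B ⊆ R) :
    ∃ l : List X, l.Perm R.toList ∧ Compatible c l ∧ firstIn B l = some x := by
  induction R using Finset.strongInduction with
  | H R ih =>
    have hR := hB.mono hBR
    by_cases hcR : c R ⊆ B
    · have hxR : x ∈ c R := hAiz B R hcR hBR hx
      have hxR' := (hc R hR).1 hxR
      obtain ⟨l, hl, hlc⟩ := exists_compatible_perm hc (R.erase x)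
      obtain ⟨hperm, hcompat⟩ := Compatible.cons_of_perm_erase hxR hxR' hl hlc
      exact ⟨x :: l, hperm, hcompat, firstIn_cons_of_mem ((hc B hB).1 hx)⟩
    · obtain ⟨a, ha, haB⟩ := not_subset.1 hcR
      have haR := (hc R hR).1 ha
      have hBR' : B ⊆ R.erase a := fun b hb => mem_erase.2 ⟨fun h => haB (h ▸ hb), hBR hb⟩
      obtain ⟨l, hl, hlc, hfirst⟩ := ih _ (erase_ssubset haR) hBR'
      obtain ⟨hperm, hcompat⟩ := Compatible.cons_of_perm_erase ha haR hl hlc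
      exact ⟨a :: l, hperm, hcompat, (firstIn_cons_of_notMem haB).trans hfirst⟩

theorem Compatible.firstIn_choice_eq_of_subset (hc : IsChoice c) (hα : PropAlpha c)
    (hl : Compatible c l) (hfull : ∀ y, y ∈ l) (hAB : A ⊆ B) (hxA : x ∈ A)
    (h : firstIn (c B) l = some x) : firstIn (c A) l = some x := by
  have hcA := hc A ⟨x, hxA⟩
  have hcB := hc B ⟨x, hAB hxA⟩
  obtain ⟨y, hy⟩ := Option.isSome_iff_exists.1 (firstIn_isSome (hAB hxA) (hfull x))
  have hyc := hl.mem_of_firstIn_eq_some hα (fun z _ => hfull z) hy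
  obtain rfl : y = x := Option.some_inj.1 ((firstIn_eq_of_subset hcB.1 hyc hy).symm.trans h)
  have hxfirst := firstIn_eq_of_subset hAB hxA hy
  exact firstIn_eq_of_subset hcA.1 (hl.mem_of_firstIn_eq_some hα (fun z _ => hfull z) hxfirst)
    hxfirst

end Enumerations

section Construction

variable [Fintype X] [DecidableEq X] {c : Finset X → Finset X} {S A B : Finset X} {x : X}

open scoped Classical in
noncomputable def compatibleOrders (c : Finset X → Finset X) : Finset (List X) :=
  {l ∈ (univ : Finset X).toList.permutations.toFinset | Compatible c l}

theorem mem_compatibleOrders {l : List X} :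
    l ∈ compatibleOrders c ↔ l.Perm (univ : Finset X).toList ∧ Compatible c l := by
  simp [compatibleOrders, List.mem_permutations]

theorem mem_of_mem_compatibleOrders {l : List X} (hl : l ∈ compatibleOrders c) (y : X) :
    y ∈ l :=
  (mem_compatibleOrders.1 hl).1.mem_iff.2 (mem_toList.2 (mem_univ y))

noncomputable def orderShare (c : Finset X → Finset X) (x : X) (S : Finset X) : ℝ :=
  #{l ∈ compatibleOrders c | firstIn S l = some x} / #(compatibleOrders c)

theorem card_compatibleOrders_pos (hc : IsChoice c) : 0 < #(compatibleOrders c) := by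
  obtain ⟨l, hl⟩ := exists_compatible_perm hc (univ : Finset X)
  exact card_pos.2 ⟨l, mem_compatibleOrders.2 hl⟩

theorem orderShare_pos (hc : IsChoice c) (hAiz : PropAizerman c) (hS : S.Nonempty)
    (hx : x ∈ c S) : 0 < orderShare c x S := by
  obtain ⟨l, hl, hlc, hfirst⟩ :=
    exists_compatible_perm_firstIn_eq hc hAiz hS hx univ (subset_univ S)
  have hcount : 0 < #{l ∈ compatibleOrders c | firstIn S l = some x} :=
    card_pos.2 ⟨l, mem_filter.2 ⟨mem_compatibleOrders.2 ⟨hl, hlc⟩, hfirst⟩⟩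
  exact div_pos (by exact_mod_cast hcount) (by exact_mod_cast card_compatibleOrders_pos hc)

theorem orderShare_eq_zero (hx : x ∉ S) : orderShare c x S = 0 := by
  rw [orderShare, filter_false_of_mem fun l _ h => hx (mem_of_firstIn_eq_some h)]
  simp

theorem sum_orderShare (hc : IsChoice c) (hS : S.Nonempty) : ∑ x ∈ S, orderShare c x S = 1 := by
  obtain ⟨x₀, hx₀⟩ := hS
  have hcount : ∑ x ∈ S, #{l ∈ compatibleOrders c | firstIn S l = some x} =
      #(compatibleOrders c) := by
    rw [card_eq_sum_card_fiberwise (f := firstIn S)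
      (t := S.map ⟨some, Option.some_injective X⟩), sum_map]
    · rfl
    intro l hl
    obtain ⟨y, hy⟩ := Option.isSome_iff_exists.1
      (firstIn_isSome hx₀ (mem_of_mem_compatibleOrders hl x₀))
    exact mem_map.2 ⟨y, mem_of_firstIn_eq_some hy, hy.symm⟩
  have hpos : (0 : ℝ) < #(compatibleOrders c) := by exact_mod_cast card_compatibleOrders_pos hc
  simp only [orderShare, ← sum_div, ← Nat.cast_sum, hcount]
  exact div_self hpos.ne'

theorem orderShare_choice_le (hc : IsChoice c) (hα : PropAlpha c) (hAB : A ⊆ B) (hxA : x ∈ A) :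
    orderShare c x (c B) ≤ orderShare c x (c A) := by
  refine div_le_div_of_nonneg_right ?_ (Nat.cast_nonneg _)
  refine Nat.cast_le.2 (card_le_card (monotone_filter_right _ fun l hl h => ?_))
  exact (mem_compatibleOrders.1 hl).2.firstIn_choice_eq_of_subset hc hα
    (mem_of_mem_compatibleOrders hl) hAB hxA h

/-- Off the fixed points of `c`, which `p_{π|c}` never consults, any tie-break will do. -/
noncomputable def orderTieBreak (c : Finset X → Finset X) (x : X) (S : Finset X) : ℝ :=
  if c S = S then orderShare c x S else if x ∈ S then (#S : ℝ)⁻¹ else 0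

theorem tieBreak_orderTieBreak (hc : IsChoice c) (hAiz : PropAizerman c) :
    TieBreak (orderTieBreak c) := by
  intro S hS
  by_cases hcS : c S = S
  · simp only [orderTieBreak, if_pos hcS]
    exact ⟨fun x hx => orderShare_pos hc hAiz hS (by rwa [hcS]), fun _ => orderShare_eq_zero,
      sum_orderShare hc hS⟩
  · simp only [orderTieBreak, if_neg hcS]
    refine ⟨fun x hx => by simpa [hx] using hS.card_pos, fun x hx => if_neg hx, ?_⟩
    rw [sum_ite_of_true fun x hx => hx, sum_const, nsmul_eq_mul]
    exact mul_inv_cancel₀ (by exact_mod_cast hS.card_pos.ne')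

theorem regular_orderTieBreak (hc : IsChoice c) (hα : PropAlpha c) (hAiz : PropAizerman c) :
    Regular fun x A => orderTieBreak c x (c A) := by
  intro A B hAB x hxA
  simp only [orderTieBreak, PropAizerman.choice_choice hc hα hAiz ⟨x, hxA⟩,
    PropAizerman.choice_choice hc hα hAiz ⟨x, hAB hxA⟩, if_true]
  exact orderShare_choice_le hc hα hAB hxA

end Construction

theorem stmt1_general {X : Type*} [Fintype X] [DecidableEq X]
    (c : Finset X → Finset X) (hc : IsChoice c) :
    PathIndep c ↔
      ∃ pi : X → Finset X → ℝ, TieBreak pi ∧ Regular (fun x A => pi x (c A)) := by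
  rw [pathIndep_iff_propAlpha_and_propAizerman hc]
  constructor
  · rintro ⟨hα, hAiz⟩
    exact ⟨orderTieBreak c, tieBreak_orderTieBreak hc hAiz, regular_orderTieBreak hc hα hAiz⟩
  · rintro ⟨pi, hpi, hreg⟩
    exact ⟨propAlpha_of_regular hc hpi hreg, propAizerman_of_regular hc hpi hreg⟩

/-- c satisfies path independence iff there is a
non-degenerate tie-break rule π such that p_{π|c} is regular. -/
theorem stmt1 {X : Type*} [Fintype X] [Nonempty X] [DecidableEq X]
    (c : Finset X → Finset X) (hc : IsChoice c) :
    PathIndep c ↔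
      ∃ pi : X → Finset X → ℝ, TieBreak pi ∧ Regular (fun x A => pi x (c A)) :=
  stmt1_general c hc
end

section
/- Let X be a nonempty finite set and c a choice correspondence on X that is a GTLM. Then c satisfies path independence if and only if there exists a utility function u : X → (0,∞) aligned with the revealed relation R such that the logit rule p_{u|c} is regular. -/
open Finset

variable {X : Type*}

-- alpha
lemma auxAlpha {X : Type*} [DecidableEq X] {c : Finset X → Finset X}
    (hc : IsChoice c) (hPI : PathIndep c) :
    ∀ A B : Finset X, A ⊆ B → ∀ x ∈ A, x ∈ c B → x ∈ c A := by
  intro A B hAB x hxA hxB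
  by_cases h : (B \ A).Nonempty
  · have hU : A ∪ (B \ A) = B := Finset.union_sdiff_of_subset hAB
    have hPI' := hPI A (B \ A) ⟨x, hxA⟩ h
    rw [hU] at hPI'
    have hx' : x ∈ c (c A ∪ c (B \ A)) := hPI' ▸ hxB
    obtain ⟨a, ha⟩ := (hc A ⟨x, hxA⟩).2
    have hne : (c A ∪ c (B \ A)).Nonempty := ⟨a, mem_union_left _ ha⟩
    have hx2 := (hc _ hne).1 hx'
    rcases Finset.mem_union.mp hx2 with h1 | h2
    · exact h1
    · exact absurd ((Finset.mem_sdiff.mp ((hc (B \ A) h).1 h2)).2) (not_not_intro hxA)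
  · have hBA : B ⊆ A := by
      intro y hy
      by_contra hyA
      exact h ⟨y, Finset.mem_sdiff.mpr ⟨hy, hyA⟩⟩
    rwa [Finset.Subset.antisymm hAB hBA]

-- outcast
lemma auxOutcast {X : Type*} [DecidableEq X] {c : Finset X → Finset X}
    (hc : IsChoice c) (hPI : PathIndep c) {A B : Finset X} (hAB : A ⊆ B)
    (hBA : c B ⊆ A) (hB : B.Nonempty) : c A = c B := by
  obtain ⟨z, hz⟩ := (hc B hB).2
  have hA : A.Nonempty := ⟨z, hBA hz⟩
  have h1 := hPI A B hA hB
  rw [Finset.union_eq_right.mpr hAB] at h1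
  have hsub2 : c B ⊆ c A := fun x hx => auxAlpha hc hPI A B hAB x (hBA hx) hx
  rw [Finset.union_eq_left.mpr hsub2] at h1
  have h2 := hPI A A hA hA
  rw [Finset.union_self, Finset.union_self] at h2
  exact h2.trans h1.symm

-- regularity from alpha/outcast + gap condition
lemma auxRegular {X : Type*} [Fintype X] [DecidableEq X] {c : Finset X → Finset X}
    (hc : IsChoice c) (hPI : PathIndep c) {u : X → ℝ} (hupos : ∀ x, 0 < u x)
    (H : ∀ S : Finset X, ∀ p ∈ c S, ∀ q ∈ S, q ∉ c S →
      ((Fintype.card X : ℝ) + 1) * u q ≤ u p) :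
    Regular (logit u c) := by
  intro A B hAB x hxA
  by_cases hxB : x ∈ c B
  · have hAne : A.Nonempty := ⟨x, hxA⟩
    have hBne : B.Nonempty := ⟨x, hAB hxA⟩
    have hxcA : x ∈ c A := auxAlpha hc hPI A B hAB x hxA hxB
    have hSA : 0 < ∑ b ∈ c A, u b := Finset.sum_pos (fun i _ => hupos i) (hc A hAne).2
    have hSB : 0 < ∑ b ∈ c B, u b := Finset.sum_pos (fun i _ => hupos i) (hc B hBne).2
    have key : ∑ b ∈ c A, u b ≤ ∑ b ∈ c B, u b := by
      by_cases hsub : c B ⊆ A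
      · rw [auxOutcast hc hPI hAB hsub hBne]
      · rw [Finset.not_subset] at hsub
        obtain ⟨w, hwB, hwA⟩ := hsub
        set m : ℝ := (Fintype.card X : ℝ) with hm
        have hm0 : (0:ℝ) ≤ m := Nat.cast_nonneg _
        have hm1 : (0:ℝ) < m + 1 := by linarith
        set S1 := (c A).filter (fun y => y ∈ c B) with hS1
        set S2 := (c A).filter (fun y => y ∉ c B) with hS2
        have e1 : ∑ b ∈ c A, u b = (∑ b ∈ S1, u b) + ∑ b ∈ S2, u b :=
          (Finset.sum_filter_add_sum_filter_not _ _ _).symm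
        have b2 : ∑ b ∈ S2, u b ≤ u w := by
          have hb : ∀ y ∈ S2, u y ≤ u w / (m + 1) := by
            intro y hy
            rw [Finset.mem_filter] at hy
            have hyB : y ∈ B := hAB ((hc A hAne).1 hy.1)
            have := H B w hwB y hyB hy.2
            rw [le_div_iff₀ hm1]
            linarith
          calc ∑ b ∈ S2, u b ≤ S2.card • (u w / (m + 1)) :=
                Finset.sum_le_card_nsmul _ _ _ hb
            _ = (S2.card : ℝ) * (u w / (m + 1)) := by rw [nsmul_eq_mul]
            _ ≤ m * (u w / (m + 1)) := by
                apply mul_le_mul_of_nonneg_right _ (div_nonneg (hupos w).le hm1.le)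
                rw [hm]
                exact_mod_cast Finset.card_le_univ S2
            _ ≤ u w := by
                have ht : (u w / (m + 1)) * (m + 1) = u w :=
                  div_mul_cancel₀ _ (ne_of_gt hm1)
                nlinarith [div_nonneg (hupos w).le hm1.le]
        have hw1 : w ∉ S1 := fun h => hwA ((hc A hAne).1 (Finset.mem_filter.mp h).1)
        have hins : insert w S1 ⊆ c B :=
          Finset.insert_subset hwB (fun y hy => (Finset.mem_filter.mp hy).2)
        have b3 : (∑ b ∈ S1, u b) + u w ≤ ∑ b ∈ c B, u b := by
          have := Finset.sum_le_sum_of_subset_of_nonneg hins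
            (fun i _ _ => (hupos i).le)
          rw [Finset.sum_insert hw1] at this
          linarith
        linarith
    simp only [logit, if_pos hxcA, if_pos hxB, ge_iff_le]
    rw [div_le_div_iff₀ hSB hSA]
    exact mul_le_mul_of_nonneg_left key (hupos x).le
  · simp only [logit, if_neg hxB]
    split_ifs with h
    · exact div_nonneg (hupos x).le (Finset.sum_nonneg fun i _ => (hupos i).le)
    · exact le_refl 0

/-- within GTLMs, c satisfies path independence iff there is a
utility function aligned with the revealed relation R whose logit rule is
regular. -/
theorem stmt2 {X : Type*} [Fintype X] [Nonempty X] [DecidableEq X]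
    (c : Finset X → Finset X) (hc : IsChoice c) (hg : IsGTLM c) :
    PathIndep c ↔
      ∃ u : X → ℝ, (∀ x, 0 < u x) ∧ AlignedRev c u ∧ Regular (logit u c) := by
  constructor
  · -- forward
    intro hPI
    obtain ⟨v, ε, hvpos, hεpos, hrep⟩ := hg
    -- revealed preference implies strictly larger v
    have hrev : ∀ p q : X, Rev c p q → v q < v p := by
      rintro p q ⟨S, hp, hqS, hqn⟩
      have hS : S.Nonempty := ⟨q, hqS⟩
      have hp' := (hrep S hS p).mp hp
      rw [hrep S hS q] at hqn
      push_neg at hqn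
      obtain ⟨z, hzS, hz⟩ := hqn hqS
      have := hp'.2 z hzS
      linarith
    refine ⟨fun a => ((Fintype.card X : ℝ) + 1) ^
        (((Finset.univ.image v).filter (fun t => t < v a)).card), ?_, ?_, ?_⟩
    · intro x
      have : (0:ℝ) < (Fintype.card X : ℝ) + 1 := by positivity
      positivity
    · -- aligned, via strict monotone step
      intro x y hxy
      have h1 := hrev x y hxy
      have hcard : ((Finset.univ.image v).filter (fun t => t < v y)).card <
          ((Finset.univ.image v).filter (fun t => t < v x)).card := by
        apply Finset.card_lt_card
        rw [Finset.ssubset_iff_of_subset]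
        · exact ⟨v y, Finset.mem_filter.mpr
            ⟨Finset.mem_image_of_mem v (Finset.mem_univ y), h1⟩, by simp⟩
        · intro t ht
          rw [Finset.mem_filter] at ht ⊢
          exact ⟨ht.1, ht.2.trans h1⟩
      have hbase : (1:ℝ) < (Fintype.card X : ℝ) + 1 := by
        have : 0 < Fintype.card X := Fintype.card_pos
        have : (1:ℝ) ≤ (Fintype.card X : ℝ) := by exact_mod_cast this
        linarith
      exact pow_lt_pow_right₀ hbase hcard
    · -- regular
      apply auxRegular hc hPI
      · intro x
        have : (0:ℝ) < (Fintype.card X : ℝ) + 1 := by positivity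
        positivity
      · intro S p hp q hq hqn
        have h1 : v q < v p := hrev p q ⟨S, hp, hq, hqn⟩
        have hcard : ((Finset.univ.image v).filter (fun t => t < v q)).card + 1 ≤
            ((Finset.univ.image v).filter (fun t => t < v p)).card := by
          apply Nat.succ_le_of_lt
          apply Finset.card_lt_card
          rw [Finset.ssubset_iff_of_subset]
          · exact ⟨v q, Finset.mem_filter.mpr
              ⟨Finset.mem_image_of_mem v (Finset.mem_univ q), h1⟩, by simp⟩
          · intro t ht
            rw [Finset.mem_filter] at ht ⊢
            exact ⟨ht.1, ht.2.trans h1⟩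
        have hbase : (1:ℝ) ≤ (Fintype.card X : ℝ) + 1 := by
          have : (0:ℝ) ≤ (Fintype.card X : ℝ) := Nat.cast_nonneg _
          linarith
        calc ((Fintype.card X : ℝ) + 1) * ((Fintype.card X : ℝ) + 1) ^
              (((Finset.univ.image v).filter (fun t => t < v q)).card)
            = ((Fintype.card X : ℝ) + 1) ^
              (((Finset.univ.image v).filter (fun t => t < v q)).card + 1) := by
              rw [pow_succ]; ring
          _ ≤ ((Fintype.card X : ℝ) + 1) ^
              (((Finset.univ.image v).filter (fun t => t < v p)).card) :=
              pow_le_pow_right₀ hbase hcard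
  · -- backward
    rintro ⟨u, hupos, _, hreg⟩
    have halpha : ∀ A B : Finset X, A ⊆ B → ∀ x ∈ A, x ∈ c B → x ∈ c A := by
      intro A B hAB x hxA hxB
      have hBne : B.Nonempty := ⟨x, hAB hxA⟩
      have hSB : 0 < ∑ b ∈ c B, u b := Finset.sum_pos (fun i _ => hupos i) (hc B hBne).2
      have h := hreg A B hAB x hxA
      by_contra hxcA
      simp only [logit, if_neg hxcA, if_pos hxB] at h
      have : 0 < u x / ∑ b ∈ c B, u b := div_pos (hupos x) hSB
      linarith
    intro A B hA hB
    have hDne : (A ∪ B).Nonempty := hA.mono Finset.subset_union_left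
    have hcD := hc (A ∪ B) hDne
    have hEne : (c A ∪ c B).Nonempty := ((hc A hA).2).mono Finset.subset_union_left
    have hEsubD : c A ∪ c B ⊆ A ∪ B :=
      Finset.union_subset ((hc A hA).1.trans Finset.subset_union_left)
        ((hc B hB).1.trans Finset.subset_union_right)
    have hDsubE : c (A ∪ B) ⊆ c A ∪ c B := by
      intro x hx
      rcases Finset.mem_union.mp (hcD.1 hx) with h | h
      · exact Finset.mem_union_left _ (halpha A (A ∪ B) Finset.subset_union_left x h hx)
      · exact Finset.mem_union_right _ (halpha B (A ∪ B) Finset.subset_union_right x h hx)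
    have hcDsubcE : c (A ∪ B) ⊆ c (c A ∪ c B) :=
      fun x hx => halpha (c A ∪ c B) (A ∪ B) hEsubD x (hDsubE hx) hx
    obtain ⟨z, hz⟩ := hcD.2
    have hzE : z ∈ c (c A ∪ c B) := hcDsubcE hz
    have hSD : 0 < ∑ b ∈ c (A ∪ B), u b :=
      Finset.sum_pos (fun i _ => hupos i) hcD.2
    have hSE : 0 < ∑ b ∈ c (c A ∪ c B), u b :=
      Finset.sum_pos (fun i _ => hupos i) (hc _ hEne).2
    have hreg' := hreg (c A ∪ c B) (A ∪ B) hEsubD z ((hc _ hEne).1 hzE)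
    simp only [logit, if_pos hzE, if_pos hz, ge_iff_le] at hreg'
    have hle : ∑ b ∈ c (c A ∪ c B), u b ≤ ∑ b ∈ c (A ∪ B), u b := by
      rw [div_le_div_iff₀ hSD hSE] at hreg'
      exact le_of_mul_le_mul_left hreg' (hupos z)
    have hfinal : c (c A ∪ c B) ⊆ c (A ∪ B) := by
      intro x hxE
      by_contra hxD
      have h1 : insert x (c (A ∪ B)) ⊆ c (c A ∪ c B) :=
        Finset.insert_subset hxE hcDsubcE
      have h2 := Finset.sum_le_sum_of_subset_of_nonneg h1 (fun i _ _ => (hupos i).le)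
      rw [Finset.sum_insert hxD] at h2
      linarith [hupos x]
    exact Finset.Subset.antisymm hcDsubcE hfinal
end

section
/- Let X be a nonempty finite set and c a choice correspondence on X that is a GTLM and satisfies path independence. Then there exists a utility function u : X → (0,∞) that is aligned with the revealed relation R and strongly convex, such that the logit rule p_{u|c} is regular. -/
open Finset

variable {X : Type*}

lemma aux_sum {X : Type*} [DecidableEq X] (r : X → ℕ) (hrinj : Function.Injective r)
    (S W : Finset X) (hW : W.Nonempty) (h : ∀ y ∈ S, ∀ z ∈ W, r y < r z) :
    ∑ y ∈ S, (2:ℝ) ^ r y ≤ ∑ z ∈ W, (2:ℝ) ^ r z := by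
  obtain ⟨z0, hz0⟩ := hW
  have h1 : ∑ y ∈ S, (2:ℝ) ^ r y = ∑ j ∈ S.image r, (2:ℝ) ^ j :=
    (Finset.sum_image (fun a _ b _ hab => hrinj hab)).symm
  have h2 : S.image r ⊆ Finset.range (r z0) := by
    intro j hj
    obtain ⟨y, hy, rfl⟩ := Finset.mem_image.mp hj
    exact Finset.mem_range.mpr (h y hy z0 hz0)
  have h3 : ∑ j ∈ Finset.range (r z0), (2:ℝ) ^ j = 2 ^ (r z0) - 1 := by
    rw [geom_sum_eq (by norm_num : (2:ℝ) ≠ 1)]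
    norm_num
  calc ∑ y ∈ S, (2:ℝ) ^ r y = ∑ j ∈ S.image r, (2:ℝ) ^ j := h1
    _ ≤ ∑ j ∈ Finset.range (r z0), (2:ℝ) ^ j :=
        Finset.sum_le_sum_of_subset_of_nonneg h2 (fun i _ _ => by positivity)
    _ = 2 ^ (r z0) - 1 := h3
    _ ≤ 2 ^ (r z0) := by linarith
    _ ≤ ∑ z ∈ W, (2:ℝ) ^ r z :=
        Finset.single_le_sum (f := fun z => (2:ℝ) ^ r z) (fun i _ => by positivity) hz0

theorem stmt6' {X : Type*} [Fintype X] [Nonempty X] [DecidableEq X]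
    (c : Finset X → Finset X) (hc : IsChoice c) (hg : IsGTLM c)
    (hpi : PathIndep c) :
    ∃ u : X → ℝ, (∀ x, 0 < u x) ∧ AlignedRev c u ∧ StronglyConvexFn u ∧
      Regular (logit u c) := by
  classical
  obtain ⟨v, ε, hv, hε, hrep⟩ := hg
  obtain ⟨e, he⟩ : ∃ e : Fin (Fintype.card X) ≃ X, Monotone (v ∘ e) := by
    let g := (Fintype.equivFin X).symm
    exact ⟨(Tuple.sort (v ∘ g)).trans g, Tuple.monotone_sort (v ∘ g)⟩
  set r : X → ℕ := fun x => ((e.symm x : Fin (Fintype.card X)) : ℕ) with hr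
  set u : X → ℝ := fun x => (2:ℝ) ^ r x with hu
  have hupos : ∀ x, 0 < u x := fun x => by rw [hu]; positivity
  have hrinj : Function.Injective r := by
    intro x y hxy
    have : e.symm x = e.symm y := Fin.ext hxy
    exact e.symm.injective this
  have hvr : ∀ x y, v x < v y → r x < r y := by
    intro x y h
    by_contra hle
    push_neg at hle
    have h2 : e.symm y ≤ e.symm x := Fin.le_def.mpr hle
    have := he h2
    simp only [Function.comp_apply, Equiv.apply_symm_apply] at this
    linarith
  have hult : ∀ x y, r x < r y → u x < u y := by
    intro x y h
    rw [hu]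
    exact pow_lt_pow_right₀ (by norm_num) h
  have hsub : ∀ A : Finset X, A.Nonempty → c A ⊆ A := fun A h => (hc A h).1
  have hne : ∀ A : Finset X, A.Nonempty → (c A).Nonempty := fun A h => (hc A h).2
  have hidem : ∀ A : Finset X, A.Nonempty → c (c A) = c A := by
    intro A h
    have := hpi A A h h
    simp only [Finset.union_self] at this
    exact this.symm
  -- Sen's α
  have halpha : ∀ A B : Finset X, A ⊆ B → ∀ x ∈ A, x ∈ c B → x ∈ c A := by
    intro A B hAB x hxA hxB
    have hA : A.Nonempty := ⟨x, hxA⟩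
    by_cases hd : (B \ A).Nonempty
    · have e1 : A ∪ (B \ A) = B := Finset.union_sdiff_of_subset hAB
      have e2 := hpi A (B \ A) hA hd
      have e3 := hpi (c A) (B \ A) (hne A hA) hd
      rw [hidem A hA] at e3
      have h1 : c B = c (c A ∪ (B \ A)) := by
        conv_lhs => rw [← e1]
        rw [e2, ← e3]
      rw [h1] at hxB
      have hun : (c A ∪ (B \ A)).Nonempty := hd.mono Finset.subset_union_right
      have hxm : x ∈ c A ∪ (B \ A) := hsub _ hun hxB
      rcases Finset.mem_union.mp hxm with h | h
      · exact h
      · exact absurd (Finset.mem_sdiff.mp h).2 (not_not_intro hxA)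
    · have hBA : B ⊆ A := by
        intro y hy
        by_contra h
        exact hd ⟨y, Finset.mem_sdiff.mpr ⟨hy, h⟩⟩
      rw [Finset.Subset.antisymm hAB hBA]
      exact hxB
  -- c B = c (c A ∪ c B) for A ⊆ B
  have hD : ∀ A B : Finset X, A ⊆ B → A.Nonempty → c B = c (c A ∪ c B) := by
    intro A B hAB hA
    have hB : B.Nonempty := hA.mono hAB
    have := hpi A B hA hB
    rwa [Finset.union_eq_right.mpr hAB] at this
  -- separation
  have hsep : ∀ A B : Finset X, A ⊆ B → A.Nonempty →
      ∀ y ∈ c A, y ∉ c B → ∀ z ∈ c B, v y < v z := by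
    intro A B hAB hA y hy hynB z hz
    have hcd := hD A B hAB hA
    have hDne : (c A ∪ c B).Nonempty := (hne A hA).mono Finset.subset_union_left
    have hyD : y ∈ c A ∪ c B := Finset.mem_union_left _ hy
    have hynD : y ∉ c (c A ∪ c B) := by rw [← hcd]; exact hynB
    have hzD : z ∈ c (c A ∪ c B) := by rw [← hcd]; exact hz
    have hzall := ((hrep _ hDne z).mp hzD).2
    have : ¬ (y ∈ c A ∪ c B ∧ ∀ t ∈ c A ∪ c B, v t - v y ≤ ε (c A ∪ c B)) :=
      fun h => hynD ((hrep _ hDne y).mpr h)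
    push_neg at this
    obtain ⟨t, htD, htv⟩ := this hyD
    have := hzall t htD
    linarith
  -- if c B ⊆ c A then c A = c B
  have heqc : ∀ A B : Finset X, A ⊆ B → A.Nonempty → c B ⊆ c A → c A = c B := by
    intro A B hAB hA h
    have hcd := hD A B hAB hA
    rw [Finset.union_eq_left.mpr h, hidem A hA] at hcd
    exact hcd.symm
  refine ⟨u, hupos, ?_, ?_, ?_⟩
  · -- AlignedRev
    rintro x y ⟨A, hx, hyA, hy⟩
    have hA : A.Nonempty := ⟨y, hyA⟩
    have hxall := ((hrep A hA x).mp hx).2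
    have hny : ¬ (y ∈ A ∧ ∀ t ∈ A, v t - v y ≤ ε A) :=
      fun h => hy ((hrep A hA y).mpr h)
    push_neg at hny
    obtain ⟨t, ht, htv⟩ := hny hyA
    have hvy : v y < v x := by have := hxall t ht; linarith
    exact hult y x (hvr _ _ hvy)
  · -- StronglyConvexFn
    refine ⟨e, fun l k m hlk hkm => ?_⟩
    have hukey : ∀ i : Fin (Fintype.card X), u (e i) = (2:ℝ) ^ (i : ℕ) := by
      intro i
      rw [hu, hr]
      simp
    rw [hukey, hukey, hukey]
    have hkm' : (k : ℕ) + 1 ≤ (m : ℕ) := hkm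
    have h2 : (2:ℝ) ^ ((k:ℕ)+1) ≤ 2 ^ (m:ℕ) := pow_le_pow_right₀ (by norm_num) hkm'
    have h3 : (0:ℝ) ≤ 2 ^ (l:ℕ) := by positivity
    have h4 : (2:ℝ) ^ ((k:ℕ)+1) = 2 * 2 ^ (k:ℕ) := by ring
    linarith
  · -- Regular
    intro A B hAB x hxA
    have hA : A.Nonempty := ⟨x, hxA⟩
    have hB : B.Nonempty := hA.mono hAB
    by_cases hxB : x ∈ c B
    · have hxcA : x ∈ c A := halpha A B hAB x hxA hxB
      have hApos : 0 < ∑ a ∈ c A, u a :=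
        Finset.sum_pos (fun i _ => hupos i) (hne A hA)
      have hBpos : 0 < ∑ b ∈ c B, u b :=
        Finset.sum_pos (fun i _ => hupos i) (hne B hB)
      have key : ∑ a ∈ c A, u a ≤ ∑ b ∈ c B, u b := by
        by_cases hdiff : (c A \ c B).Nonempty
        · have hne2 : (c B \ c A).Nonempty := by
            by_contra h
            rw [Finset.not_nonempty_iff_eq_empty, Finset.sdiff_eq_empty_iff_subset] at h
            have heq := heqc A B hAB hA h
            rw [heq] at hdiff
            simp at hdiff
          have hs : ∑ y ∈ c A \ c B, u y ≤ ∑ z ∈ c B \ c A, u z := by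
            rw [hu]
            refine aux_sum r hrinj _ _ hne2 ?_
            intro y hy z hz
            rw [Finset.mem_sdiff] at hy hz
            exact hvr _ _ (hsep A B hAB hA y hy.1 hy.2 z hz.1)
          calc ∑ a ∈ c A, u a
              = ∑ a ∈ c A ∩ c B, u a + ∑ a ∈ c A \ c B, u a :=
                (Finset.sum_inter_add_sum_sdiff _ _ _).symm
            _ ≤ ∑ a ∈ c A ∩ c B, u a + ∑ a ∈ c B \ c A, u a := by linarith
            _ = ∑ a ∈ c B ∩ c A, u a + ∑ a ∈ c B \ c A, u a := by rw [Finset.inter_comm]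
            _ = ∑ b ∈ c B, u b := Finset.sum_inter_add_sum_sdiff _ _ _
        · rw [Finset.not_nonempty_iff_eq_empty, Finset.sdiff_eq_empty_iff_subset] at hdiff
          exact Finset.sum_le_sum_of_subset_of_nonneg hdiff (fun i _ _ => (hupos i).le)
      simp only [logit, if_pos hxB, if_pos hxcA, ge_iff_le]
      rw [div_le_div_iff₀ hBpos hApos]
      exact mul_le_mul_of_nonneg_left key (hupos x).le
    · simp only [logit, if_neg hxB, ge_iff_le]
      split
      · exact div_nonneg (hupos x).le
          (Finset.sum_nonneg fun i _ => (hupos i).le)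
      · exact le_refl _

/-- within GTLMs satisfying path independence, there is a
strongly convex utility function aligned with R whose logit rule is
regular. -/
theorem stmt6 {X : Type*} [Fintype X] [Nonempty X] [DecidableEq X]
    (c : Finset X → Finset X) (hc : IsChoice c) (hg : IsGTLM c)
    (hpi : PathIndep c) :
    ∃ u : X → ℝ, (∀ x, 0 < u x) ∧ AlignedRev c u ∧ StronglyConvexFn u ∧
      Regular (logit u c) := by
  exact stmt6' c hc hg hpi
end

section
/- Let X be a nonempty finite set and c a choice correspondence on X represented as a GTLM by a pair (v, ε). (i) If c satisfies property α and there are menus A ⊆ B with c(B) ⊆ A and c(A) ≠ c(B) (the Outcast condition is violated at A ⊆ B), then ε(A) ≥ ε(B). (ii) If there are menus A ⊆ B and x ∈ A with x ∈ c(B) and x ∉ c(A) (property α is violated at A ⊆ B), then ε(A) < ε(B). -/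
open Finset

variable {X : Type*}

/-- in a GTLM representation (v, ε): (i) if property α holds and
the Outcast condition is violated at A ⊆ B then ε A ≥ ε B; (ii) if property α
is violated at A ⊆ B then ε A < ε B. -/
theorem stmt9 {X : Type*} [Fintype X] [Nonempty X] [DecidableEq X] (c : Finset X → Finset X)
    (hc : IsChoice c) (v : X → ℝ) (eps : Finset X → ℝ)
    (hrep : GTLMRep c v eps) :
    (PropAlpha c → ∀ A B : Finset X, A.Nonempty → A ⊆ B → c B ⊆ A →
      c A ≠ c B → eps A ≥ eps B) ∧
    (∀ A B : Finset X, A ⊆ B → ∀ x ∈ A, x ∈ c B → x ∉ c A →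
      eps A < eps B) := by

  obtain ⟨hv, heps, hch⟩ := hrep
  constructor
  · intro hα A B hA hAB hBA hne
    have hB : B.Nonempty := hA.mono hAB
    have hsub : c B ⊆ c A := fun x hx => hα A B hAB x (hBA hx) hx
    have hex : ∃ x, x ∈ c A ∧ x ∉ c B := by
      by_contra h
      push_neg at h
      exact hne (Finset.Subset.antisymm h hsub)
    obtain ⟨x, hxA, hxB⟩ := hex
    obtain ⟨m, hmB, hm⟩ := B.exists_max_image v hB
    have hmcB : m ∈ c B := (hch B hB m).2 ⟨hmB, fun y hy => by linarith [hm y hy, heps B]⟩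
    have hmA : m ∈ A := hBA hmcB
    have hxBmem : x ∈ B := hAB ((hch A hA x).1 hxA).1
    rw [hch B hB x] at hxB
    push_neg at hxB
    obtain ⟨y, hyB, hy⟩ := hxB hxBmem
    have h1 := ((hch A hA x).1 hxA).2 m hmA
    have h2 := hm y hyB
    linarith
  · intro A B hAB x hxA hxcB hxcA
    have hA : A.Nonempty := ⟨x, hxA⟩
    have hB : B.Nonempty := hA.mono hAB
    rw [hch A hA x] at hxcA
    push_neg at hxcA
    obtain ⟨y, hyA, hy⟩ := hxcA hxA
    have := ((hch B hB x).1 hxcB).2 y (hAB hyA)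
    linarith
end

section
/- Let X be a nonempty finite set and c a choice correspondence on X that is a GTLM. Then c satisfies property α if and only if there exist v : X → (0,∞) strongly concave and a threshold ε assigning a nonnegative real to each menu with ε(A) ≥ ε(B) whenever A ⊆ B, such that c(A) = {x ∈ A : (max_{y ∈ A} v(y)) − v(x) ≤ ε(A)} for every menu A. -/
open Finset

variable {X : Type*}

section MyAux

variable {X : Type*} [Fintype X] [DecidableEq X]

set_option linter.unusedSectionVars false

noncomputable def auxEps' (c : Finset X → Finset X) (v : X → ℝ) (B : Finset X) : ℝ :=
  if h : B.Nonempty ∧ (c B).Nonempty then B.sup' h.1 v - (c B).inf' h.2 v else 0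

lemma auxFilter_nonempty (A : Finset X) :
    (Finset.univ.powerset.filter (fun B => A ⊆ B)).Nonempty :=
  ⟨Finset.univ, by simp⟩

noncomputable def auxEps (c : Finset X → Finset X) (v : X → ℝ) (A : Finset X) : ℝ :=
  (Finset.univ.powerset.filter (fun B => A ⊆ B)).sup' (auxFilter_nonempty A) (auxEps' c v)

lemma auxEps'_nonneg (c : Finset X → Finset X) (hc : IsChoice c) (v : X → ℝ) (B : Finset X) :
    0 ≤ auxEps' c v B := by
  unfold auxEps'
  split_ifs with h
  · obtain ⟨z, hz, hze⟩ := Finset.exists_mem_eq_inf' h.2 v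
    rw [hze]
    have hzB : z ∈ B := (hc B h.1).1 hz
    have := Finset.le_sup' v hzB
    linarith
  · exact le_refl _

lemma auxEps_nonneg (c : Finset X → Finset X) (hc : IsChoice c) (v : X → ℝ) (A : Finset X) :
    0 ≤ auxEps c v A := by
  have h1 : Finset.univ ∈ Finset.univ.powerset.filter (fun B => A ⊆ B) := by simp
  calc (0:ℝ) ≤ auxEps' c v Finset.univ := auxEps'_nonneg c hc v _
    _ ≤ auxEps c v A := Finset.le_sup' _ h1

lemma auxEps_antitone (c : Finset X → Finset X) (v : X → ℝ) {A B : Finset X} (hAB : A ⊆ B) :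
    auxEps c v B ≤ auxEps c v A := by
  apply Finset.sup'_le
  intro C hC
  simp only [Finset.mem_filter, Finset.mem_powerset] at hC
  exact Finset.le_sup' _ (by simp [Finset.mem_filter, hAB.trans hC.2])

lemma myForward [Nonempty X] (c : Finset X → Finset X) (hc : IsChoice c) (hg : IsGTLM c)
    (hα : PropAlpha c) :
    ∃ (v : X → ℝ) (eps : Finset X → ℝ), GTLMRep c v eps ∧
      StronglyConcaveFn v ∧ ∀ A B : Finset X, A.Nonempty → A ⊆ B → eps B ≤ eps A := by
  obtain ⟨v0, ε0, hv0pos, hε0, hrep⟩ := hg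
  set n := Fintype.card X with hn
  let e0 : Fin n ≃ X := (Fintype.equivFin X).symm
  let σ := Tuple.sort (v0 ∘ e0)
  let e : Fin n ≃ X := σ.trans e0
  have hmono : ∀ i j : Fin n, i ≤ j → v0 (e i) ≤ v0 (e j) := by
    intro i j hij
    exact Tuple.monotone_sort (v0 ∘ e0) hij
  set v : X → ℝ := fun x => 3 - (1/2 : ℝ) ^ ((e.symm x : ℕ)) with hv
  have hvpos : ∀ x, 0 < v x := by
    intro x
    have h1 : (1/2:ℝ) ^ ((e.symm x : ℕ)) ≤ 1 := pow_le_one₀ (by norm_num) (by norm_num)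
    simp only [hv]
    linarith
  -- upper-set property of choices w.r.t. the rank order
  have hupper : ∀ B : Finset X, B.Nonempty → ∀ x ∈ c B, ∀ z ∈ B,
      e.symm x ≤ e.symm z → z ∈ c B := by
    intro B hB x hx z hz hle
    rw [hrep B hB] at hx ⊢
    have h1 : v0 (e (e.symm x)) ≤ v0 (e (e.symm z)) := hmono _ _ hle
    simp only [Equiv.apply_symm_apply] at h1
    exact ⟨hz, fun y hy => by have := hx.2 y hy; linarith⟩
  refine ⟨v, auxEps c v, ⟨hvpos, auxEps_nonneg c hc v, ?_⟩, ?_, ?_⟩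
  · -- representation
    intro A hA x
    constructor
    · intro hx
      have hxA := (hc A hA).1 hx
      refine ⟨hxA, fun y hy => ?_⟩
      have h1 : v y ≤ A.sup' hA v := Finset.le_sup' v hy
      have h2 : (c A).inf' (hc A hA).2 v ≤ v x := Finset.inf'_le v hx
      have h3 : auxEps' c v A = A.sup' hA v - (c A).inf' (hc A hA).2 v := by
        rw [auxEps', dif_pos ⟨hA, (hc A hA).2⟩]
      have h4 : auxEps' c v A ≤ auxEps c v A :=
        Finset.le_sup' _ (by simp [Finset.mem_filter])
      linarith
    · rintro ⟨hxA, hbound⟩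
      by_contra hxc
      set r : ℕ := (e.symm x : ℕ) with hr
      obtain ⟨z, hzA, hz⟩ := A.exists_max_image (fun a => ((e.symm a : ℕ))) hA
      have hzc : z ∈ c A := by
        rw [hrep A hA]
        refine ⟨hzA, fun y hy => ?_⟩
        have hle : (e.symm y) ≤ (e.symm z) := Fin.le_def.mpr (hz y hy)
        have h1 : v0 (e (e.symm y)) ≤ v0 (e (e.symm z)) := hmono _ _ hle
        simp only [Equiv.apply_symm_apply] at h1
        have := hε0 A
        linarith
      have hzx : z ≠ x := fun h => hxc (h ▸ hzc)
      have hrz : r + 1 ≤ (e.symm z : ℕ) := by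
        have h1 : r ≤ (e.symm z : ℕ) := hz x hxA
        have hne : (e.symm x : ℕ) ≠ (e.symm z : ℕ) := by
          intro h
          exact hzx (e.symm.injective (Fin.ext h.symm))
        omega
      have hgap : (1/2:ℝ)^(r+1) ≤ v z - v x := by
        have h1 : (1/2:ℝ)^((e.symm z : ℕ)) ≤ (1/2:ℝ)^(r+1) :=
          pow_le_pow_of_le_one (by norm_num) (by norm_num) hrz
        have h2 : (1/2:ℝ)^(r+1) = (1/2:ℝ)^r * (1/2) := pow_succ _ _
        simp only [hv]
        rw [← hr]
        linarith
      have heps : auxEps c v A ≤ (1/2:ℝ)^(r+1) - (1/2:ℝ)^(n-1) := by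
        apply Finset.sup'_le
        intro B hB'
        simp only [Finset.mem_filter, Finset.mem_powerset] at hB'
        have hAB : A ⊆ B := hB'.2
        have hBne : B.Nonempty := hA.mono hAB
        have hcB := (hc B hBne).2
        rw [auxEps', dif_pos ⟨hBne, hcB⟩]
        obtain ⟨w, hw, hwe⟩ := Finset.exists_mem_eq_inf' hcB v
        rw [hwe]
        have hrw : r + 1 ≤ (e.symm w : ℕ) := by
          by_contra hcon
          push_neg at hcon
          have hle : e.symm w ≤ e.symm x := Fin.le_def.mpr (by omega)
          have hxB : x ∈ c B := hupper B hBne w hw x (hAB hxA) hle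
          exact hxc (hα A B hAB x hxA hxB)
        have hsup : B.sup' hBne v ≤ 3 - (1/2:ℝ)^(n-1) := by
          apply Finset.sup'_le
          intro b hb
          have hb1 : ((e.symm b : ℕ)) ≤ n - 1 := by have := (e.symm b).isLt; omega
          have h5 : (1/2:ℝ)^(n-1) ≤ (1/2:ℝ)^((e.symm b : ℕ)) :=
            pow_le_pow_of_le_one (by norm_num) (by norm_num) hb1
          simp only [hv]
          linarith
        have hvw : 3 - (1/2:ℝ)^(r+1) ≤ v w := by
          have h6 : (1/2:ℝ)^((e.symm w:ℕ)) ≤ (1/2:ℝ)^(r+1) :=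
            pow_le_pow_of_le_one (by norm_num) (by norm_num) hrw
          simp only [hv]
          linarith
        linarith
      have hb := hbound z hzA
      have hp : (0:ℝ) < (1/2:ℝ)^(n-1) := by positivity
      have h7 : (1/2:ℝ)^(r+1) ≤ (1/2:ℝ)^(r+1) - (1/2:ℝ)^(n-1) :=
        le_trans hgap (le_trans hb heps)
      linarith
  · -- strong concavity
    refine ⟨e, fun l k m hlk hkm => ?_⟩
    simp only [hv, Equiv.symm_apply_apply]
    have hlk' : (l:ℕ) + 1 ≤ (k:ℕ) := hlk
    have h1 : (1/2:ℝ)^(k:ℕ) ≤ (1/2:ℝ)^((l:ℕ)+1) :=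
      pow_le_pow_of_le_one (by norm_num) (by norm_num) hlk'
    have h2 : (1/2:ℝ)^((l:ℕ)+1) = (1/2:ℝ)^(l:ℕ) * (1/2) := pow_succ _ _
    have h3 : (0:ℝ) ≤ (1/2:ℝ)^(m:ℕ) := by positivity
    linarith
  · intro A B _ hAB
    exact auxEps_antitone c v hAB

end MyAux

/-- within GTLMs, c satisfies property α iff c has a GTLM
representation (v, ε) with v strongly concave and ε decreasing in set
inclusion. -/
theorem stmt10 {X : Type*} [Fintype X] [Nonempty X] [DecidableEq X] (c : Finset X → Finset X)
    (hc : IsChoice c) (hg : IsGTLM c) :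
    PropAlpha c ↔
      ∃ (v : X → ℝ) (eps : Finset X → ℝ), GTLMRep c v eps ∧
        StronglyConcaveFn v ∧
        ∀ A B : Finset X, A.Nonempty → A ⊆ B → eps B ≤ eps A := by
  constructor
  · intro hα
    exact myForward c hc hg hα
  · rintro ⟨v, eps, ⟨hvpos, heps0, hrep⟩, _, hanti⟩ A B hAB x hxA hxB
    have hAne : A.Nonempty := ⟨x, hxA⟩
    have hBne : B.Nonempty := ⟨x, hAB hxA⟩
    rw [hrep B hBne] at hxB
    rw [hrep A hAne]
    exact ⟨hxA, fun y hy =>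
      le_trans (hxB.2 y (hAB hy)) (hanti A B hAne hAB)⟩
end

section
/- Let X be a nonempty finite set and c a choice correspondence on X that is a GTLM. Then c satisfies property α if and only if c admits a limited attention model (LAM) representation (≽, Γ). Moreover, if c satisfies property α, then c admits a LAM representation in which all alternatives are mutually indifferent (x ∼ y for all x, y ∈ X). -/
open Finset

variable {X : Type*}

/-- A limited attention model (LAM) representation of c: a weak order pre
and a competition filter Γ. -/
def IsLAM {X : Type*} (c : Finset X → Finset X) (pre : X → X → Prop)
    (Gamma : Finset X → Finset X) : Prop :=
  (∀ x y, pre x y ∨ pre y x) ∧ Transitive pre ∧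
  (∀ A : Finset X, A.Nonempty → (Gamma A).Nonempty ∧ Gamma A ⊆ A) ∧
  (∀ A B : Finset X, A ⊆ B → ∀ x ∈ A, x ∈ Gamma B → x ∈ Gamma A) ∧
  (∀ A : Finset X, A.Nonempty → ∀ x, (x ∈ c A ↔ x ∈ Gamma A ∧ ∀ y ∈ Gamma A, pre x y))

/-- within GTLMs, c satisfies property α iff c admits a LAM
representation; moreover under property α it admits one with all alternatives
mutually indifferent. -/
theorem stmt11 {X : Type*} [Fintype X] [Nonempty X] [DecidableEq X] (c : Finset X → Finset X)
    (hc : IsChoice c) (hg : IsGTLM c) :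
    (PropAlpha c ↔ ∃ (pre : X → X → Prop) (Gamma : Finset X → Finset X),
        IsLAM c pre Gamma) ∧
    (PropAlpha c → ∃ (pre : X → X → Prop) (Gamma : Finset X → Finset X),
        IsLAM c pre Gamma ∧ ∀ x y, pre x y ∧ pre y x) := by
  obtain ⟨v, ε, hv, hε, hrep⟩ := hg
  have lamOf : PropAlpha c → IsLAM c (fun _ _ => True) c := by
    intro hα
    refine ⟨fun _ _ => Or.inl trivial, fun _ _ _ _ _ => trivial, ?_, ?_, ?_⟩
    · intro A hA; exact ⟨(hc A hA).2, (hc A hA).1⟩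
    · intro A B hAB x hxA hxB; exact hα A B hAB x hxA hxB
    · intro A hA x
      exact ⟨fun hx => ⟨hx, fun _ _ => trivial⟩, fun ⟨hx, _⟩ => hx⟩
  have back : (∃ pre Gamma, IsLAM c pre Gamma) → PropAlpha c := by
    rintro ⟨pre, Γ, hcomp, htrans, hΓ, hfilter, hcrep⟩
    intro A B hAB x hxA hxB
    have hBne : B.Nonempty := ⟨x, hAB hxA⟩
    have hAne : A.Nonempty := ⟨x, hxA⟩
    have hxΓB := (hcrep B hBne x).1 hxB
    have hxΓA : x ∈ Γ A := hfilter A B hAB x hxA hxΓB.1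
    refine (hcrep A hAne x).2 ⟨hxΓA, ?_⟩
    intro y hyΓA
    by_contra hnxy
    have hyA : y ∈ A := (hΓ A hAne).2 hyΓA
    have hsub : ({x, y} : Finset X) ⊆ A := by
      intro z hz; simp only [Finset.mem_insert, Finset.mem_singleton] at hz
      rcases hz with rfl | rfl <;> assumption
    have hne2 : ({x, y} : Finset X).Nonempty := ⟨x, by simp⟩
    have hxΓ2 : x ∈ Γ {x, y} := hfilter {x, y} A hsub x (by simp) hxΓA
    have hyΓ2 : y ∈ Γ {x, y} := hfilter {x, y} A hsub y (by simp) hyΓA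
    have hxnc2 : x ∉ c {x, y} := fun h =>
      hnxy (((hcrep {x, y} hne2 x).1 h).2 y hyΓ2)
    -- from GTLM, x not chosen in {x,y} forces v x < v y
    have hvy : v x < v y := by
      rw [(hrep {x, y} hne2 x).not] at hxnc2
      push_neg at hxnc2
      have hεxy := hε ({x, y} : Finset X)
      obtain ⟨z, hz, hzgt⟩ := hxnc2 (by simp)
      simp only [Finset.mem_insert, Finset.mem_singleton] at hz
      rcases hz with rfl | rfl <;> linarith
    -- then y is chosen in B
    have hyB : y ∈ c B := by
      refine ((hrep B hBne y).2) ⟨hAB hyA, fun z hz => ?_⟩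
      have := ((hrep B hBne x).1 hxB).2 z hz
      linarith
    have : pre x y := hxΓB.2 y (((hcrep B hBne y).1 hyB).1)
    exact hnxy this
  refine ⟨⟨fun hα => ⟨_, _, lamOf hα⟩, back⟩,
    fun hα => ⟨_, _, lamOf hα, fun _ _ => ⟨trivial, trivial⟩⟩⟩
end

section
/- Let X be a nonempty finite set and c a choice correspondence on X admitting a limited attention model (LAM) representation (≽, Γ), with strict part ≻ of ≽. If c violates property α, then there exist menus A ⊆ B and x ∈ A such that p_{u|c}(x,B) > p_{u|c}(x,A) for every u : X → (0,∞) aligned with ≻ (i.e. x ≻ y implies u(x) > u(y)), and W_{u'}(A) > W_{u'}(B) for some u' : X → (0,∞) aligned with ≻. -/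
open Finset

variable {X : Type*}

/-- if c has a LAM representation and violates property α,
then there are menus A ⊆ B and x ∈ A with p_{u|c}(x,B) > p_{u|c}(x,A) for
every u aligned with the strict part of pre, and W_{u'}(A) > W_{u'}(B) for
some such u'. -/
theorem stmt12 {X : Type*} [Fintype X] [Nonempty X] [DecidableEq X] (c : Finset X → Finset X)
    (hc : IsChoice c) (pre : X → X → Prop) (Gamma : Finset X → Finset X)
    (hlam : IsLAM c pre Gamma) (halpha : ¬ PropAlpha c) :
    ∃ A B : Finset X, A ⊆ B ∧ ∃ x ∈ A,
      (∀ u : X → ℝ, (∀ z, 0 < u z) →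
        (∀ a b, pre a b → ¬ pre b a → u b < u a) →
        logit u c x A < logit u c x B) ∧
      (∃ u' : X → ℝ, (∀ z, 0 < u' z) ∧
        (∀ a b, pre a b → ¬ pre b a → u' b < u' a) ∧
        Welfare u' c B < Welfare u' c A) := by
  classical
  rw [PropAlpha] at halpha
  push_neg at halpha
  obtain ⟨A, B, hAB, x, hxA, hxcB, hxcA⟩ := halpha
  obtain ⟨htot, htrans, hG, hfilter, hrep⟩ := hlam
  have hxB : x ∈ B := hAB hxA
  have hAne : A.Nonempty := ⟨x, hxA⟩
  have hBne : B.Nonempty := ⟨x, hxB⟩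
  have hcAne := (hc A hAne).2
  have hcBne := (hc B hBne).2
  have hcAsub := (hc A hAne).1
  have hcBsub := (hc B hBne).1
  have hxrep := (hrep B hBne x).1 hxcB
  have hxGB : x ∈ Gamma B := hxrep.1
  have hxGA : x ∈ Gamma A := hfilter A B hAB x hxA hxGB
  have hy : ∃ y ∈ Gamma A, ¬ pre x y := by
    by_contra h
    push_neg at h
    exact hxcA ((hrep A hAne x).2 ⟨hxGA, h⟩)
  obtain ⟨y, hyG, hyx⟩ := hy
  have hpre_yx : pre y x := (htot x y).resolve_left hyx
  have hA_strict : ∀ a ∈ c A, pre a x ∧ ¬ pre x a := by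
    intro a ha
    obtain ⟨haG, hamax⟩ := (hrep A hAne a).1 ha
    have hay := hamax y hyG
    exact ⟨htrans hay hpre_yx, fun hxa => hyx (htrans hxa hay)⟩
  have hB_equiv : ∀ b ∈ c B, pre b x ∧ pre x b := by
    intro b hb
    obtain ⟨hbG, hbmax⟩ := (hrep B hBne b).1 hb
    exact ⟨hbmax x hxGB, hxrep.2 b hbG⟩
  refine ⟨A, B, hAB, x, hxA, ?_, ?_⟩
  · intro u hu _
    have h0 : logit u c x A = 0 := by simp [logit, hxcA]
    have hpos : 0 < logit u c x B := by
      rw [logit, if_pos hxcB]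
      exact div_pos (hu x) (Finset.sum_pos (fun b _ => hu b) hcBne)
    linarith
  · set L : X → Finset X := fun z => Finset.univ.filter (fun w => pre z w ∧ ¬ pre w z)
      with hL
    set u' : X → ℝ := fun z => 1 + ((L z).card : ℝ) with hu'
    have hupos : ∀ z, 0 < u' z := by
      intro z
      simp only [hu']
      positivity
    have halign : ∀ a b, pre a b → ¬ pre b a → u' b < u' a := by
      intro a b hab hba
      have hsub : L b ⊂ L a := by
        constructor
        · intro w hw
          simp only [hL, Finset.mem_filter, Finset.mem_univ, true_and] at hw ⊢
          exact ⟨htrans hab hw.1, fun hwa => hw.2 (htrans hwa hab)⟩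
        · intro hcon
          have hrefl : pre b b := (htot b b).elim id id
          have hb_in : b ∈ L a := by
            simp [hL, hab, hba]
          have hb_notin : b ∉ L b := by
            simp [hL, hrefl]
          exact hb_notin (hcon hb_in)
      have hcard := Finset.card_lt_card hsub
      have : ((L b).card : ℝ) < (L a).card := by exact_mod_cast hcard
      simp only [hu']
      linarith
    -- u' is constant on the equivalence class of x
    have hLeq : ∀ b ∈ c B, L b = L x := by
      intro b hb
      obtain ⟨hbx, hxb⟩ := hB_equiv b hb
      ext w
      simp only [hL, Finset.mem_filter, Finset.mem_univ, true_and]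
      constructor
      · rintro ⟨h1, h2⟩
        exact ⟨htrans hxb h1, fun hwx => h2 (htrans hwx hxb)⟩
      · rintro ⟨h1, h2⟩
        exact ⟨htrans hbx h1, fun hwb => h2 (htrans hwb hbx)⟩
    have hub : ∀ b ∈ c B, u' b = u' x := by
      intro b hb
      simp only [hu', hLeq b hb]
    have huA : ∀ a ∈ c A, u' x < u' a := by
      intro a ha
      obtain ⟨h1, h2⟩ := hA_strict a ha
      exact halign a x h1 h2
    refine ⟨u', hupos, halign, ?_⟩
    set SA : ℝ := ∑ a ∈ c A, u' a with hSA
    set SB : ℝ := ∑ b ∈ c B, u' b with hSB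
    have hSApos : 0 < SA := Finset.sum_pos (fun a _ => hupos a) hcAne
    have hSBpos : 0 < SB := Finset.sum_pos (fun b _ => hupos b) hcBne
    have hWA : Welfare u' c A = ∑ a ∈ c A, u' a * (u' a / SA) := by
      rw [Welfare]
      rw [← Finset.sum_subset hcAsub (fun a _ ha => by simp [logit, ha])]
      refine Finset.sum_congr rfl fun a ha => ?_
      rw [logit, if_pos ha]
    have hWB : Welfare u' c B = ∑ b ∈ c B, u' b * (u' b / SB) := by
      rw [Welfare]
      rw [← Finset.sum_subset hcBsub (fun b _ hb => by simp [logit, hb])]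
      refine Finset.sum_congr rfl fun b hb => ?_
      rw [logit, if_pos hb]
    have hSBval : SB = (c B).card * u' x := by
      rw [hSB, Finset.sum_congr rfl hub, Finset.sum_const, nsmul_eq_mul]
    have hWBval : Welfare u' c B = u' x := by
      rw [hWB, Finset.sum_congr rfl fun b hb => by rw [hub b hb],
        Finset.sum_const, nsmul_eq_mul, hSBval]
      have hcard : ((c B).card : ℝ) ≠ 0 := by
        have := Finset.card_pos.mpr hcBne
        positivity
      have hux : u' x ≠ 0 := ne_of_gt (hupos x)
      have hgen : ∀ (n t : ℝ), n ≠ 0 → t ≠ 0 → n * (t * (t / (n * t))) = t := by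
        intro n t hn ht
        field_simp
      exact hgen _ _ hcard hux
    have hlow : ∑ a ∈ c A, u' x * (u' a / SA) = u' x := by
      rw [← Finset.mul_sum, ← Finset.sum_div, ← hSA, div_self (ne_of_gt hSApos), mul_one]
    have hWAgt : u' x < Welfare u' c A := by
      rw [hWA, ← hlow]
      refine Finset.sum_lt_sum_of_nonempty hcAne fun a ha => ?_
      exact mul_lt_mul_of_pos_right (huA a ha) (div_pos (hupos a) hSApos)
    rw [hWBval]
    exact hWAgt
end

section
/- Let X be a nonempty finite set and c a choice correspondence on X admitting a limited attention model (LAM) representation (≽, Γ), with strict part ≻ and indifference part ∼ of ≽. Say that u : X → (0,∞) represents ≽ if u(x) ≥ u(y) holds exactly when x ≽ y. Then c violates property α if and only if there exist menus A ⊆ B and x ∈ A such that p_{u|c}(x,B) > p_{u|c}(x,A) for some u representing ≽, and W_{u'}(A) > W_{u'}(B) for some u' representing ≽. -/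
open Finset

variable {X : Type*}

/-- u : X → (0,∞) represents the weak order pre. -/
def RepresentsWO {X : Type*} (pre : X → X → Prop) (u : X → ℝ) : Prop :=
  (∀ z, 0 < u z) ∧ ∀ a b, (u b ≤ u a ↔ pre a b)

/-- A complete transitive relation on a finite type admits a positive utility
representation (counting lower sets). -/
lemma exists_rep {X : Type*} [Fintype X] (pre : X → X → Prop)
    (htot : ∀ x y, pre x y ∨ pre y x) (htr : Transitive pre) :
    ∃ u : X → ℝ, RepresentsWO pre u := by
  classical
  refine ⟨fun x => ((univ.filter fun z => pre x z).card : ℝ), ?_, ?_⟩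
  · intro z
    have hz : z ∈ univ.filter fun w => pre z w := by
      simp [(htot z z).elim id id]
    exact_mod_cast Nat.cast_pos.mpr (card_pos.mpr ⟨z, hz⟩)
  · intro a b
    constructor
    · intro h
      by_contra hab
      have hba : pre b a := (htot a b).resolve_left hab
      have hsub : (univ.filter fun z => pre a z) ⊆ univ.filter fun z => pre b z := by
        intro z hz
        simp only [mem_filter, mem_univ, true_and] at hz ⊢
        exact htr hba hz
      have hb : b ∈ univ.filter fun z => pre b z := by
        simp [(htot b b).elim id id]
      have hb' : b ∉ univ.filter fun z => pre a z := by simp [hab]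
      have hlt : (univ.filter fun z => pre a z).card <
          (univ.filter fun z => pre b z).card :=
        card_lt_card ((ssubset_iff_of_subset hsub).mpr ⟨b, hb, hb'⟩)
      have : ((univ.filter fun z => pre a z).card : ℝ) <
          ((univ.filter fun z => pre b z).card : ℝ) := by exact_mod_cast hlt
      linarith
    · intro h
      have hsub : (univ.filter fun z => pre b z) ⊆ univ.filter fun z => pre a z := by
        intro z hz
        simp only [mem_filter, mem_univ, true_and] at hz ⊢
        exact htr h hz
      simp only []
      exact_mod_cast card_le_card hsub

/-- Under a LAM representation, all chosen elements are indifferent, so the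
welfare of a menu equals the utility of any chosen element. -/
lemma welfare_of_mem {X : Type*} [DecidableEq X] (c : Finset X → Finset X)
    (hc : IsChoice c) (pre : X → X → Prop) (Gamma : Finset X → Finset X)
    (hlam : IsLAM c pre Gamma) (u : X → ℝ) (hu : RepresentsWO pre u)
    {A : Finset X} (hA : A.Nonempty) {x : X} (hx : x ∈ c A) :
    Welfare u c A = u x := by
  obtain ⟨-, -, -, -, hchar⟩ := hlam
  have hsub : c A ⊆ A := (hc A hA).1
  have key : ∀ a ∈ c A, u a = u x := by
    intro a ha
    have ha' := (hchar A hA a).mp ha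
    have hx' := (hchar A hA x).mp hx
    exact le_antisymm ((hu.2 x a).mpr (hx'.2 a ha'.1)) ((hu.2 a x).mpr (ha'.2 x hx'.1))
  have hS : (∑ b ∈ c A, u b) = (c A).card * u x := by
    rw [Finset.sum_congr rfl key]
    simp [mul_comm]
  have hcard : (0 : ℝ) < (c A).card := by
    exact_mod_cast card_pos.mpr ⟨x, hx⟩
  have hux : 0 < u x := hu.1 x
  have h1 : Welfare u c A = ∑ a ∈ c A, u a * logit u c a A := by
    unfold Welfare
    rw [← Finset.sum_subset hsub]
    intro a _ ha
    simp [logit, ha]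
  rw [h1]
  have h2 : ∀ a ∈ c A, u a * logit u c a A = u x * (u x / ((c A).card * u x)) := by
    intro a ha
    rw [logit, if_pos ha, hS, key a ha]
  rw [Finset.sum_congr rfl h2, Finset.sum_const, nsmul_eq_mul]
  field_simp

/-- if c has a LAM representation (pre, Γ), then c violates
property α iff there are menus A ⊆ B and x ∈ A with a regularity violation
for some u representing pre, which is welfare-decreasing for some u'
representing pre. -/
theorem stmt13 {X : Type*} [Fintype X] [Nonempty X] [DecidableEq X] (c : Finset X → Finset X)
    (hc : IsChoice c) (pre : X → X → Prop) (Gamma : Finset X → Finset X)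
    (hlam : IsLAM c pre Gamma) :
    ¬ PropAlpha c ↔
      ∃ A B : Finset X, A ⊆ B ∧ ∃ x ∈ A,
        (∃ u : X → ℝ, RepresentsWO pre u ∧ logit u c x A < logit u c x B) ∧
        (∃ u' : X → ℝ, RepresentsWO pre u' ∧ Welfare u' c B < Welfare u' c A) := by
  obtain ⟨htot, htr, hΓ, hfilt, hchar⟩ := hlam
  have hlam' : IsLAM c pre Gamma := ⟨htot, htr, hΓ, hfilt, hchar⟩
  constructor
  · intro hna
    simp only [PropAlpha, not_forall] at hna
    obtain ⟨A, B, hAB, x, hxA, hxcB, hxnA⟩ := hna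
    obtain ⟨u, hu⟩ := exists_rep pre htot htr
    have hAne : A.Nonempty := ⟨x, hxA⟩
    have hBne : B.Nonempty := ⟨x, hAB hxA⟩
    refine ⟨A, B, hAB, x, hxA, ⟨u, hu, ?_⟩, ⟨u, hu, ?_⟩⟩
    · have h0 : logit u c x A = 0 := by simp [logit, hxnA]
      have hpos : 0 < logit u c x B := by
        rw [logit, if_pos hxcB]
        exact div_pos (hu.1 x) (Finset.sum_pos (fun b _ => hu.1 b) ⟨x, hxcB⟩)
      linarith
    · obtain ⟨y, hy⟩ := (hc A hAne).2
      have hWB : Welfare u c B = u x :=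
        welfare_of_mem c hc pre Gamma hlam' u hu hBne hxcB
      have hWA : Welfare u c A = u y :=
        welfare_of_mem c hc pre Gamma hlam' u hu hAne hy
      have hxΓB : x ∈ Gamma B := ((hchar B hBne x).mp hxcB).1
      have hxΓA : x ∈ Gamma A := hfilt A B hAB x hxA hxΓB
      have hy' := (hchar A hAne y).mp hy
      have hnxy : ¬ pre x y := by
        intro hxy
        exact hxnA ((hchar A hAne x).mpr ⟨hxΓA, fun z hz => htr hxy (hy'.2 z hz)⟩)
      have : ¬ (u y ≤ u x) := fun h => hnxy ((hu.2 x y).mp h)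
      rw [hWA, hWB]
      linarith [not_le.mp this]
  · rintro ⟨A, B, hAB, x, hxA, ⟨u, hu, hlog⟩, ⟨u', hu', hW⟩⟩ hα
    have hAne : A.Nonempty := ⟨x, hxA⟩
    have hBne : B.Nonempty := ⟨x, hAB hxA⟩
    have hxcB : x ∈ c B := by
      by_contra hx
      have h0 : logit u c x B = 0 := by simp [logit, hx]
      have hnn : 0 ≤ logit u c x A := by
        rw [logit]
        split
        · exact div_nonneg (hu.1 x).le
            (Finset.sum_nonneg fun b _ => (hu.1 b).le)
        · exact le_refl 0
      linarith
    have hxcA : x ∈ c A := hα A B hAB x hxA hxcB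
    have hWA : Welfare u' c A = u' x :=
      welfare_of_mem c hc pre Gamma hlam' u' hu' hAne hxcA
    have hWB : Welfare u' c B = u' x :=
      welfare_of_mem c hc pre Gamma hlam' u' hu' hBne hxcB
    rw [hWA, hWB] at hW
    exact lt_irrefl _ hW
end

section
/- Let X = {a₁, a₂, a₃, a₄, a₅} and let ≻₁, ≻₂, ≻₃ be the linear orders a₄ ≻₁ a₁ ≻₁ a₅ ≻₁ a₂ ≻₁ a₃, a₃ ≻₂ a₂ ≻₂ a₁ ≻₂ a₄ ≻₂ a₅, and a₄ ≻₃ a₁ ≻₃ a₂ ≻₃ a₃ ≻₃ a₅. Define the choice correspondence c by c(A) = max(≻₁, A) ∪ max(≻₂, A) ∪ max(≻₃, A) for every nonempty A ⊆ X, where max(≻ᵢ, A) is the ≻ᵢ-maximal element of A. Then c satisfies path independence, but there is no utility function u : X → (0,∞) such that the logit rule p_{u|c} is regular. -/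
open Finset

variable {X : Type*}

/-- Ranking for the linear order ≻₁ : a₄ ≻ a₁ ≻ a₅ ≻ a₂ ≻ a₃ (higher is better). -/
def rk1 : Fin 5 → ℕ := ![3, 1, 0, 4, 2]

/-- Ranking for the linear order ≻₂ : a₃ ≻ a₂ ≻ a₁ ≻ a₄ ≻ a₅. -/
def rk2 : Fin 5 → ℕ := ![2, 3, 4, 1, 0]

/-- Ranking for the linear order ≻₃ : a₄ ≻ a₁ ≻ a₂ ≻ a₃ ≻ a₅. -/
def rk3 : Fin 5 → ℕ := ![3, 2, 1, 4, 0]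

/-- The choice correspondence selecting the maxima of ≻₁, ≻₂, ≻₃. -/
def cEx (A : Finset (Fin 5)) : Finset (Fin 5) :=
  A.filter (fun x =>
    (∀ y ∈ A, rk1 y ≤ rk1 x) ∨ (∀ y ∈ A, rk2 y ≤ rk2 x) ∨ (∀ y ∈ A, rk3 y ≤ rk3 x))

set_option maxHeartbeats 4000000 in
/-- the choice correspondence cEx (union of the maxima of the
three linear orders) satisfies path independence, yet no utility function
u : Fin 5 → (0,∞) makes the logit rule p_{u|cEx} regular. -/
theorem stmt14 :
    PathIndep cEx ∧
      ¬ ∃ u : Fin 5 → ℝ, (∀ x, 0 < u x) ∧ Regular (logit u cEx) := by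
  constructor
  · unfold PathIndep cEx
    decide
  · rintro ⟨u, hu, hreg⟩
    have e1 : cEx {1,2,4} = {1,2,4} := by decide
    have e2 : cEx {0,1,2,4} = {0,2} := by decide
    have e3 : cEx {0,3} = {0,3} := by decide
    have e4 : cEx {0,1,3} = {1,3} := by decide
    have h1 := hreg {1,2,4} {0,1,2,4} (by decide) 2 (by decide)
    have h2 := hreg {0,3} {0,1,3} (by decide) 3 (by decide)
    rw [logit, logit, e1, e2] at h1
    rw [logit, logit, e3, e4] at h2
    simp only [show ((2:Fin 5) ∈ ({1,2,4}:Finset (Fin 5))) = True by simp,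
      show ((2:Fin 5) ∈ ({0,2}:Finset (Fin 5))) = True by simp,
      show ((3:Fin 5) ∈ ({0,3}:Finset (Fin 5))) = True by simp,
      show ((3:Fin 5) ∈ ({1,3}:Finset (Fin 5))) = True by simp, if_true] at h1 h2
    have s1 : ∑ b ∈ ({1,2,4}:Finset (Fin 5)), u b = u 1 + u 2 + u 4 := by
      simp [Finset.sum_insert, Finset.mem_insert]; ring
    have s2 : ∑ b ∈ ({0,2}:Finset (Fin 5)), u b = u 0 + u 2 := by
      simp [Finset.sum_insert, Finset.mem_insert]
    have s3 : ∑ b ∈ ({0,3}:Finset (Fin 5)), u b = u 0 + u 3 := by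
      simp [Finset.sum_insert, Finset.mem_insert]
    have s4 : ∑ b ∈ ({1,3}:Finset (Fin 5)), u b = u 1 + u 3 := by
      simp [Finset.sum_insert, Finset.mem_insert]
    rw [s1, s2] at h1
    rw [s3, s4] at h2
    have p0 := hu 0; have p1 := hu 1; have p2 := hu 2; have p3 := hu 3; have p4 := hu 4
    have k1 : u 1 + u 2 + u 4 ≤ u 0 + u 2 := by
      rw [ge_iff_le, div_le_div_iff₀ (by linarith) (by linarith)] at h1
      nlinarith [hu 2]
    have k2 : u 0 + u 3 ≤ u 1 + u 3 := by
      rw [ge_iff_le, div_le_div_iff₀ (by linarith) (by linarith)] at h2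
      nlinarith [hu 3]
    linarith
end

section
/- Let X be a nonempty finite set and c a choice correspondence on X rationalized by an acyclic binary relation ≻. Then c satisfies path independence if and only if there exists a utility function u : X → (0,∞) aligned with ≻ (i.e. x ≻ y implies u(x) > u(y)) such that the logit rule p_{u|c} is regular. -/
open Finset

variable {X : Type*}

/-- A binary relation is acyclic if its transitive closure is irreflexive. -/
def AcyclicRel {X : Type*} (s : X → X → Prop) : Prop :=
  ∀ x, ¬ Relation.TransGen s x x

/-- s rationalizes c: c always selects the s-undominated alternatives. -/
def RationalizedBy {X : Type*} (c : Finset X → Finset X) (s : X → X → Prop) : Prop :=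
  ∀ A : Finset X, A.Nonempty → ∀ x, (x ∈ c A ↔ x ∈ A ∧ ∀ b ∈ A, ¬ s b x)

section Stmt15Aux

variable {X : Type*} [DecidableEq X]

/-- Sen's α holds for any rationalized correspondence. -/
private lemma stmt15_alpha {c : Finset X → Finset X} {s : X → X → Prop}
    (hrat : RationalizedBy c s) {A B : Finset X} (hAB : A ⊆ B) {x : X}
    (hxA : x ∈ A) (hxB : x ∈ c B) : x ∈ c A := by
  have hBne : B.Nonempty := ⟨x, hAB hxA⟩
  obtain ⟨-, hund⟩ := (hrat B hBne x).1 hxB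
  exact (hrat A ⟨x, hxA⟩ x).2 ⟨hxA, fun b hb => hund b (hAB hb)⟩

/-- Path independence implies property P1: if something in a menu dominates
`x`, then some chosen element dominates `x`. Stated contrapositively. -/
private lemma stmt15_p1_of_pi {c : Finset X → Finset X} {s : X → X → Prop}
    (hac : AcyclicRel s) (hrat : RationalizedBy c s)
    (hpi : PathIndep c) {A : Finset X} (hA : A.Nonempty) {x y : X}
    (hyA : y ∈ A) (hsyx : s y x) (hund : ∀ b ∈ c A, ¬ s b x) : False := by
  have hxx : ¬ s x x := fun h => hac x (Relation.TransGen.single h)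
  have hcx : c ({x} : Finset X) = ({x} : Finset X) := by
    apply Finset.Subset.antisymm
    · intro z hz
      have := (hrat {x} ⟨x, Finset.mem_singleton_self x⟩ z).1 hz
      exact this.1
    · intro z hz
      rw [Finset.mem_singleton] at hz
      rw [hz]
      exact (hrat {x} ⟨x, Finset.mem_singleton_self x⟩ x).2
        ⟨Finset.mem_singleton_self x, by
          intro b hb
          rw [Finset.mem_singleton] at hb; rw [hb]; exact hxx⟩
  have hx : x ∈ c (c A ∪ {x}) := by
    apply (hrat _ ⟨x, Finset.mem_union_right _ (Finset.mem_singleton_self x)⟩ x).2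
    refine ⟨Finset.mem_union_right _ (Finset.mem_singleton_self x), ?_⟩
    intro b hb
    rcases Finset.mem_union.mp hb with hb | hb
    · exact hund b hb
    · rw [Finset.mem_singleton] at hb; rw [hb]; exact hxx
  rw [← hcx, ← hpi A {x} hA ⟨x, Finset.mem_singleton_self x⟩] at hx
  obtain ⟨-, h2⟩ := (hrat _ ⟨x, Finset.mem_union_right _ (Finset.mem_singleton_self x)⟩ x).1 hx
  exact h2 y (Finset.mem_union_left _ hyA) hsyx

/-- Regularity of the logit rule (for a positive utility) implies property P1. -/
private lemma stmt15_p1_of_reg {c : Finset X → Finset X} {s : X → X → Prop}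
    (hc : IsChoice c) (hac : AcyclicRel s) (hrat : RationalizedBy c s)
    {u : X → ℝ} (hu : ∀ x, 0 < u x) (hreg : Regular (logit u c))
    {A : Finset X} (hA : A.Nonempty) {x y : X}
    (hyA : y ∈ A) (hsyx : s y x) (hund : ∀ b ∈ c A, ¬ s b x) : False := by
  have hxx : ¬ s x x := fun h => hac x (Relation.TransGen.single h)
  set B := insert x A with hB
  have hBne : B.Nonempty := Finset.insert_nonempty _ _
  have hxB : x ∈ B := Finset.mem_insert_self _ _
  have hxnB : x ∉ c B := fun h =>
    ((hrat B hBne x).1 h).2 y (Finset.mem_insert_of_mem hyA) hsyx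
  have hcBA : c B ⊆ c A := by
    intro z hz
    have hzB := (hc B hBne).1 hz
    rcases Finset.mem_insert.mp hzB with rfl | hzA
    · exact absurd hz hxnB
    · exact stmt15_alpha hrat (Finset.subset_insert _ _) hzA hz
  have hundB : ∀ b ∈ c B, ¬ s b x := fun b hb => hund b (hcBA hb)
  set A' := insert x (c B) with hA'
  have hA'ne : A'.Nonempty := Finset.insert_nonempty _ _
  have hA'B : A' ⊆ B := Finset.insert_subset hxB (hc B hBne).1
  have hxA' : x ∈ c A' := by
    apply (hrat A' hA'ne x).2
    refine ⟨Finset.mem_insert_self _ _, ?_⟩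
    intro b hb
    rcases Finset.mem_insert.mp hb with rfl | hb
    · exact hxx
    · exact hundB b hb
  have hcBsub : ∀ w ∈ c B, w ∈ c A' := fun w hw =>
    stmt15_alpha hrat hA'B (Finset.mem_insert_of_mem hw) hw
  have hcA' : c A' = A' := by
    apply Finset.Subset.antisymm (hc A' hA'ne).1
    intro w hw
    rcases Finset.mem_insert.mp hw with rfl | hw
    · exact hxA'
    · exact hcBsub w hw
  obtain ⟨z, hz⟩ := (hc B hBne).2
  have hzA' : z ∈ c A' := hcBsub z hz
  have hSB : (0:ℝ) < ∑ b ∈ c B, u b := Finset.sum_pos (fun b _ => hu b) ⟨z, hz⟩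
  have hSA' : ∑ b ∈ c A', u b = u x + ∑ b ∈ c B, u b := by
    rw [hcA', hA', Finset.sum_insert hxnB]
  have hreg' := hreg A' B hA'B z ((hc A' hA'ne).1 hzA')
  rw [logit, logit, if_pos hzA', if_pos hz] at hreg'
  have hlt : u z / (∑ b ∈ c A', u b) < u z / (∑ b ∈ c B, u b) := by
    apply div_lt_div_of_pos_left (hu z) hSB
    rw [hSA']
    linarith [hu x]
  linarith

/-- The key sum monotonicity: under P1 and a geometric growth condition on the
utility, the total chosen utility is monotone along inclusions that share a
chosen element. -/
private lemma stmt15_sum_le [Fintype X] {c : Finset X → Finset X} {s : X → X → Prop}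
    (hc : IsChoice c) (hrat : RationalizedBy c s)
    (hp1 : ∀ A : Finset X, A.Nonempty → ∀ x y : X, y ∈ A → s y x →
      (∀ b ∈ c A, ¬ s b x) → False)
    {u : X → ℝ} (hu : ∀ x, 0 < u x)
    (hbound : ∀ e d, s e d → (Fintype.card X : ℝ) * u d ≤ u e)
    {A B : Finset X} (hAB : A ⊆ B) {x : X} (hxA : x ∈ A) (hxB : x ∈ c B) :
    ∑ b ∈ c A, u b ≤ ∑ b ∈ c B, u b := by
  classical
  have hBne : B.Nonempty := ⟨x, hAB hxA⟩
  have hAne : A.Nonempty := ⟨x, hxA⟩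
  have hnpos : (0:ℝ) < (Fintype.card X : ℝ) := by
    have : 0 < Fintype.card X := Fintype.card_pos_iff.mpr ⟨x⟩
    exact_mod_cast this
  -- every element of c A \ c B is dominated by some element of c B \ c A
  have hdom : ∀ d ∈ c A \ c B, ∃ e, e ∈ c B \ c A ∧ s e d := by
    intro d hd
    rw [Finset.mem_sdiff] at hd
    obtain ⟨hdA, hdnB⟩ := hd
    have hdB : d ∈ B := hAB ((hc A hAne).1 hdA)
    have hdund := ((hrat A hAne d).1 hdA).2
    -- d is dominated by something in B
    have : ∃ y ∈ B, s y d := by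
      by_contra h
      push_neg at h
      exact hdnB ((hrat B hBne d).2 ⟨hdB, h⟩)
    obtain ⟨y, hyB, hyd⟩ := this
    -- hence by some chosen element of B
    have : ∃ e ∈ c B, s e d := by
      by_contra h
      push_neg at h
      exact hp1 B hBne d y hyB hyd h
    obtain ⟨e, heB, hed⟩ := this
    refine ⟨e, Finset.mem_sdiff.mpr ⟨heB, fun heA => ?_⟩, hed⟩
    exact hdund e ((hc A hAne).1 heA) hed
  -- choose a dominating element for each such d
  set g : X → X := fun d =>
    if hd : ∃ e, e ∈ c B \ c A ∧ s e d then hd.choose else d with hg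
  have hgspec : ∀ d ∈ c A \ c B, g d ∈ c B \ c A ∧ s (g d) d := by
    intro d hd
    have h := hdom d hd
    simp only [hg, dif_pos h]
    exact h.choose_spec
  have key : ∑ d ∈ c A \ c B, u d ≤ ∑ e ∈ c B \ c A, u e := by
    rw [← Finset.sum_fiberwise_of_maps_to (g := g) (fun d hd => (hgspec d hd).1) u]
    apply Finset.sum_le_sum
    intro e he
    have hfib : ∀ d ∈ (c A \ c B).filter (fun d => g d = e), u d ≤
        u e / (Fintype.card X : ℝ) := by
      intro d hd
      rw [Finset.mem_filter] at hd
      obtain ⟨hd1, hd2⟩ := hd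
      have hsed : s e d := by
        have := (hgspec d hd1).2
        rwa [hd2] at this
      rw [le_div_iff₀ hnpos, mul_comm]
      exact hbound e d hsed
    calc ∑ d ∈ (c A \ c B).filter (fun d => g d = e), u d
        ≤ ∑ _d ∈ (c A \ c B).filter (fun d => g d = e),
            (u e / (Fintype.card X : ℝ)) := Finset.sum_le_sum hfib
      _ = ((c A \ c B).filter (fun d => g d = e)).card *
            (u e / (Fintype.card X : ℝ)) := by
            rw [Finset.sum_const, nsmul_eq_mul]
      _ ≤ (Fintype.card X : ℝ) * (u e / (Fintype.card X : ℝ)) := by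
            apply mul_le_mul_of_nonneg_right _ (le_of_lt (div_pos (hu e) hnpos))
            exact_mod_cast Finset.card_le_univ _
      _ = u e := by field_simp
  have h1 : ∑ b ∈ c A ∩ c B, u b + ∑ b ∈ c A \ c B, u b = ∑ b ∈ c A, u b :=
    Finset.sum_inter_add_sum_sdiff _ _ _
  have h2 : ∑ b ∈ c B ∩ c A, u b + ∑ b ∈ c B \ c A, u b = ∑ b ∈ c B, u b :=
    Finset.sum_inter_add_sum_sdiff _ _ _
  rw [Finset.inter_comm] at h2
  linarith

end Stmt15Aux

/-- if c is rationalized by an acyclic relation ≻, then c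
satisfies path independence iff there is a utility function aligned with ≻
whose logit rule is regular. -/
theorem stmt15 {X : Type*} [Fintype X] [Nonempty X] [DecidableEq X]
    (c : Finset X → Finset X) (hc : IsChoice c) (s : X → X → Prop)
    (hac : AcyclicRel s) (hrat : RationalizedBy c s) :
    PathIndep c ↔
      ∃ u : X → ℝ, (∀ x, 0 < u x) ∧ (∀ a b, s a b → u b < u a) ∧
        Regular (logit u c) := by
  classical
  constructor
  · -- Path independence ⇒ a suitable utility exists
    intro hpi
    have hp1 : ∀ A : Finset X, A.Nonempty → ∀ x y : X, y ∈ A → s y x →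
        (∀ b ∈ c A, ¬ s b x) → False := by
      intro A hA x y hyA hsyx hund
      exact stmt15_p1_of_pi hac hrat hpi hA hyA hsyx hund
    -- the height of an element w.r.t. the transitive closure of s
    set ht : X → ℕ := fun x =>
      (Finset.univ.filter (fun y => Relation.TransGen s x y)).card with hht
    set n : ℕ := Fintype.card X with hn
    set u : X → ℝ := fun x => ((n : ℝ) + 1) ^ (ht x) with hu
    have hone : (1:ℝ) < (n : ℝ) + 1 := by
      have h0 : 0 < n := Fintype.card_pos
      have : (0:ℝ) < (n:ℝ) := by exact_mod_cast h0
      linarith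
    have hhlt : ∀ a b, s a b → ht b < ht a := by
      intro a b hab
      apply Finset.card_lt_card
      rw [Finset.ssubset_iff_of_subset]
      · refine ⟨b, ?_, ?_⟩
        · exact Finset.mem_filter.mpr ⟨Finset.mem_univ _, Relation.TransGen.single hab⟩
        · intro hb
          exact hac b (Finset.mem_filter.mp hb).2
      · intro z hz
        rw [Finset.mem_filter] at hz ⊢
        exact ⟨Finset.mem_univ _, Relation.TransGen.head hab hz.2⟩
    have hupos : ∀ x, 0 < u x := fun x => pow_pos (by linarith) _
    have halign : ∀ a b, s a b → u b < u a := by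
      intro a b hab
      exact pow_lt_pow_right₀ hone (hhlt a b hab)
    have hbound : ∀ e d, s e d → (n : ℝ) * u d ≤ u e := by
      intro e d hed
      have h1 : ht d + 1 ≤ ht e := hhlt e d hed
      have h2 : ((n:ℝ) + 1) ^ (ht d + 1) ≤ ((n:ℝ) + 1) ^ (ht e) :=
        pow_le_pow_right₀ (by linarith) h1
      have h3 : ((n:ℝ) + 1) ^ (ht d + 1) = ((n:ℝ) + 1) * u d := by
        rw [pow_succ]; ring
      have h4 : (n:ℝ) * u d ≤ ((n:ℝ) + 1) * u d := by
        have := hupos d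
        nlinarith
      calc (n:ℝ) * u d ≤ ((n:ℝ) + 1) * u d := h4
        _ = ((n:ℝ) + 1) ^ (ht d + 1) := h3.symm
        _ ≤ u e := h2
    refine ⟨u, hupos, halign, ?_⟩
    intro A B hAB x hxA
    by_cases hxB : x ∈ c B
    · have hxcA : x ∈ c A := stmt15_alpha hrat hAB hxA hxB
      rw [logit, logit, if_pos hxcA, if_pos hxB, ge_iff_le]
      have hS : ∑ b ∈ c A, u b ≤ ∑ b ∈ c B, u b :=
        stmt15_sum_le hc hrat hp1 hupos hbound hAB hxA hxB
      have hSA : (0:ℝ) < ∑ b ∈ c A, u b :=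
        Finset.sum_pos (fun b _ => hupos b) ⟨x, hxcA⟩
      gcongr
    · rw [logit, logit, if_neg hxB]
      split
      · next hxcA =>
        have hSA : (0:ℝ) < ∑ b ∈ c A, u b :=
          Finset.sum_pos (fun b _ => hupos b) ⟨x, hxcA⟩
        positivity
      · exact le_refl 0
  · -- a suitable utility exists ⇒ path independence
    rintro ⟨u, hu, _halign, hreg⟩
    intro A B hA hB
    have hABne : (A ∪ B).Nonempty := hA.mono Finset.subset_union_left
    have hcU : (c A ∪ c B).Nonempty := (hc A hA).2.mono Finset.subset_union_left
    have hcUsub : c A ∪ c B ⊆ A ∪ B :=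
      Finset.union_subset
        ((hc A hA).1.trans Finset.subset_union_left)
        ((hc B hB).1.trans Finset.subset_union_right)
    apply Finset.Subset.antisymm
    · intro z hz
      obtain ⟨hzU, hund⟩ := (hrat _ hABne z).1 hz
      have hzc : z ∈ c A ∪ c B := by
        rcases Finset.mem_union.mp hzU with h | h
        · exact Finset.mem_union_left _ ((hrat A hA z).2
            ⟨h, fun b hb => hund b (Finset.mem_union_left _ hb)⟩)
        · exact Finset.mem_union_right _ ((hrat B hB z).2
            ⟨h, fun b hb => hund b (Finset.mem_union_right _ hb)⟩)
      exact (hrat _ hcU z).2 ⟨hzc, fun b hb => hund b (hcUsub hb)⟩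
    · intro z hz
      obtain ⟨hzc, hund⟩ := (hrat _ hcU z).1 hz
      apply (hrat _ hABne z).2
      refine ⟨hcUsub hzc, ?_⟩
      intro b hb hsb
      rcases Finset.mem_union.mp hb with hbA | hbB
      · exact stmt15_p1_of_reg hc hac hrat hu hreg hA hbA hsb
          (fun e he => hund e (Finset.mem_union_left _ he))
      · exact stmt15_p1_of_reg hc hac hrat hu hreg hB hbB hsb
          (fun e he => hund e (Finset.mem_union_right _ he))
end
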